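/- arXiv:1506.08386 — 10 statements merged into one kernel-verified Lean document; each statement's English description precedes it below -/
import Mathlib

section
/- Let F be a field and A an F-linear abelian semisimple category. An F-linear functor Φ : A → Vec_F is corepresentable if and only if its support (the set of isomorphism classes of simple objects S with Φ(S) ≠ 0) is finite and dim_F Φ(S) < ∞ for every simple object S. -/
open CategoryTheory CategoryTheory.Limits Opposite

/-!
If `Φ ≅ Hom(N, -)`, then `Φ(S) ≅ Hom(N, S)` is finite-dimensional, and by Schur's lemma it
vanishes unless `S` is isomorphic to one of the finitely many simple summands of `N`.

Conversely, choose pairwise non-isomorphic representatives `T` of the support and a basis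
`b_T` of `Φ(T)` over the division ring `End T`. Put `N = ⨁_T T^{b_T}` and let `x ∈ Φ(N)` have
the basis vectors as components. By Schur's lemma `Hom(N, T) ≅ (End T)^{b_T}`, and under this
identification `g ↦ Φ(g) x` is the coordinate isomorphism of the basis; on simples outside the
support both sides vanish. Both functors are additive and every object is a finite biproduct
of simples, so `Hom(N, -) → Φ` is an isomorphism.
-/

universe u v w

namespace CategoryTheory

def IsFiniteBiproductOfSimples {C : Type*} [Category C] [HasZeroMorphisms C]
    [HasFiniteBiproducts C] (X : C) : Prop :=
  ∃ (n : ℕ) (f : Fin n → C), (∀ i, Simple (f i)) ∧ Nonempty (X ≅ ⨁ f)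

section Semisimple

variable {C D : Type*} [Category C] [Category D] [Preadditive C] [Preadditive D]
  {G H : C ⥤ D} [G.Additive] [H.Additive]

lemma NatTrans.isIso_app_biproduct {J : Type} [Fintype J] (f : J → C) [HasBiproduct f]
    (α : G ⟶ H) [∀ j, IsIso (α.app (f j))] : IsIso (α.app (⨁ f)) := by
  refine ⟨∑ j, H.map (biproduct.π f j) ≫ inv (α.app (f j)) ≫ G.map (biproduct.ι f j), ?_, ?_⟩
  · simp only [Preadditive.comp_sum, ← α.naturality_assoc, IsIso.hom_inv_id_assoc,
      ← G.map_comp, ← G.map_sum]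
    rw [biproduct.total, G.map_id]
  · simp only [Preadditive.sum_comp, Category.assoc, α.naturality, IsIso.inv_hom_id_assoc,
      ← H.map_comp, ← H.map_sum]
    rw [biproduct.total, H.map_id]

lemma NatTrans.isIso_of_isIso_app_simple [HasFiniteBiproducts C]
    (hsemisimple : ∀ X : C, IsFiniteBiproductOfSimples X)
    (α : G ⟶ H) (hα : ∀ S : C, Simple S → IsIso (α.app S)) : IsIso α := by
  suffices ∀ X, IsIso (α.app X) from NatIso.isIso_of_isIso_app α
  intro X
  obtain ⟨n, f, hf, ⟨e⟩⟩ := hsemisimple X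
  have := fun i => hα (f i) (hf i)
  rw [NatTrans.isIso_app_iff_of_iso α e]
  exact isIso_app_biproduct f α

lemma hom_eq_zero_of_isEmpty_iso [HasKernels C] {X Y : C} [Simple X] [Simple Y]
    (h : IsEmpty (X ≅ Y)) (f : X ⟶ Y) : f = 0 := by
  by_contra hf
  have := isIso_of_hom_simple hf
  exact h.false (asIso f)

lemma exists_iso_of_biproduct_hom_ne_zero [HasKernels C] {J : Type} [Fintype J] (f : J → C)
    [HasBiproduct f] [∀ j, Simple (f j)] {S : C} [Simple S] {g : ⨁ f ⟶ S} (hg : g ≠ 0) :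
    ∃ j, Nonempty (f j ≅ S) := by
  by_contra! h
  refine hg (biproduct.hom_ext' _ _ fun j => ?_)
  rw [comp_zero]
  by_contra hj
  have := isIso_of_hom_simple hj
  exact (h j).false (asIso (biproduct.ι f j ≫ g))

end Semisimple

lemma exists_finset_pairwise_nonIso_cover {C : Type*} [Category C] (P : C → Prop)
    (hP : ∀ {X Y : C}, (X ≅ Y) → P X → P Y) {s : Finset C}
    (hs : ∀ X, P X → ∃ T ∈ s, Nonempty (X ≅ T)) :
    ∃ R : Finset C, (∀ T ∈ R, P T) ∧ (∀ X, P X → ∃ T ∈ R, Nonempty (X ≅ T)) ∧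
      ∀ T ∈ R, ∀ T' ∈ R, Nonempty (T ≅ T') → T = T' := by
  classical
  let rep : C → C := fun X => (⟦X⟧ : _root_.Quotient (isIsomorphicSetoid C)).out
  have rep_iso (X : C) : Nonempty (rep X ≅ X) := Quotient.mk_out (s := isIsomorphicSetoid C) X
  refine ⟨(s.filter P).image rep, ?_, fun X hX => ?_, ?_⟩
  · simp only [Finset.mem_image, Finset.mem_filter]
    rintro _ ⟨T, ⟨-, hT⟩, rfl⟩
    exact hP (rep_iso T).some.symm hT
  · obtain ⟨T, hT, ⟨e⟩⟩ := hs X hX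
    exact ⟨rep T, Finset.mem_image_of_mem _ (Finset.mem_filter.2 ⟨hT, hP e hX⟩),
      ⟨e ≪≫ (rep_iso T).some.symm⟩⟩
  · simp only [Finset.mem_image]
    rintro _ ⟨T, -, rfl⟩ _ ⟨T', -, rfl⟩ ⟨e⟩
    exact congrArg _root_.Quotient.out
      (_root_.Quotient.sound ⟨(rep_iso T).some.symm ≪≫ e ≪≫ (rep_iso T').some⟩)

section Linear

def Functor.mapEndRingHom {C D : Type*} [Category C] [Category D] [Preadditive C] [Preadditive D]
    (G : C ⥤ D) [G.Additive] (X : C) : End X →+* End (G.obj X) :=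
  { G.mapEnd X with
    map_zero' := G.map_zero X X
    map_add' := fun _ _ => G.map_add }

variable {F : Type w} [Field F] {C : Type u} [Category.{v} C] [Preadditive C]
  (Φ : C ⥤ ModuleCat.{v} F) [Φ.Additive]

instance Functor.moduleEndObj (X : C) : Module (End X) (Φ.obj X) :=
  Module.compHom (Φ.obj X) ((ModuleCat.endRingEquiv (Φ.obj X)).toRingHom.comp (Φ.mapEndRingHom X))

lemma Functor.end_smul_eq_map {X : C} (d : End X) (v : Φ.obj X) : d • v = Φ.map d v := rfl

variable [Linear F C] [Φ.Linear F]

instance isScalarTower_end_functorObj (X : C) : IsScalarTower F (End X) (Φ.obj X) :=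
  ⟨fun c d v => congrArg (fun f => ModuleCat.Hom.hom f v) (Φ.map_smul c d)⟩

noncomputable def linearCoyonedaHomOfElem {N : C} (x : Φ.obj N) :
    (linearCoyoneda F C).obj (op N) ⟶ Φ where
  app X := ModuleCat.ofHom
    { toFun := fun g => Φ.map g x
      map_add' := fun g g' => by simp
      map_smul' := fun c g => by simp }
  naturality X Y f := by
    ext (g : N ⟶ X)
    change Φ.map (g ≫ f) x = Φ.map f (Φ.map g x)
    simp

lemma linearCoyonedaHomOfElem_app_apply {N X : C} (x : Φ.obj N) (g : N ⟶ X) :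
    (linearCoyonedaHomOfElem Φ x).app X g = Φ.map g x := rfl

section BasisBiproduct

variable [HasFiniteBiproducts C] {K : Type} [Fintype K] {T : K → C}
  {ι : K → Type} [∀ k, Fintype (ι k)] (b : ∀ k, Module.Basis (ι k) (End (T k)) (Φ.obj (T k)))

variable (T ι) in
noncomputable abbrev sigmaBiproduct : C := ⨁ fun p : Σ k, ι k => T p.1

noncomputable def basisBiproductElem : Φ.obj (sigmaBiproduct T ι) :=
  ∑ p, Φ.map (biproduct.ι (fun p : Σ k, ι k => T p.1) p) (b p.1 p.2)

lemma linearCoyonedaHomOfElem_basisBiproductElem_app_apply {X : C}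
    (g : sigmaBiproduct T ι ⟶ X) :
    (linearCoyonedaHomOfElem Φ (basisBiproductElem Φ b)).app X g =
      ∑ p, Φ.map (biproduct.ι _ p ≫ g) (b p.1 p.2) := by
  simp only [linearCoyonedaHomOfElem_app_apply, basisBiproductElem, map_sum, Functor.map_comp,
    ModuleCat.comp_apply]

variable [HasKernels C] [∀ k, Simple (T k)]

lemma subsingleton_sigmaBiproduct_hom {S : C} [Simple S] (hS : ∀ k, IsEmpty (T k ≅ S)) :
    Subsingleton (sigmaBiproduct T ι ⟶ S) :=
  ⟨fun _ _ => biproduct.hom_ext' _ _ fun p =>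
    (hom_eq_zero_of_isEmpty_iso (hS p.1) _).trans (hom_eq_zero_of_isEmpty_iso (hS p.1) _).symm⟩

lemma bijective_linearCoyonedaHomOfElem_basisBiproductElem_app
    (hT : ∀ k k', Nonempty (T k ≅ T k') → k = k') (k : K) :
    Function.Bijective ((linearCoyonedaHomOfElem Φ (basisBiproductElem Φ b)).app (T k)) := by
  have hvanish (g : sigmaBiproduct T ι ⟶ T k) (p : Σ k, ι k) (hp : p.1 ≠ k) :
      biproduct.ι _ p ≫ g = 0 :=
    hom_eq_zero_of_isEmpty_iso (X := T p.1) (Y := T k) ⟨fun e => hp (hT _ _ ⟨e⟩)⟩ _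
  let r : (sigmaBiproduct T ι ⟶ T k) → (ι k → End (T k)) := fun g j =>
    biproduct.ι (fun p : Σ k, ι k => T p.1) ⟨k, j⟩ ≫ g
  have hr : Function.Bijective r := by
    refine ⟨fun g g' h => biproduct.hom_ext' _ _ fun ⟨k', j⟩ => ?_, fun c => ?_⟩
    · by_cases hk : k' = k
      · subst hk
        exact congrFun h j
      · rw [hvanish g _ hk, hvanish g' _ hk]
    · refine ⟨∑ j, biproduct.π (fun p : Σ k, ι k => T p.1) ⟨k, j⟩ ≫ c j, funext fun j => ?_⟩
      dsimp only [r]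
      rw [Preadditive.comp_sum, Finset.sum_eq_single j, biproduct.ι_π_self_assoc]
      · intro j' _ hj'
        rw [biproduct.ι_π_ne_assoc _ (by simpa using hj'.symm), zero_comp]
      · simp
  have hfactor (g : sigmaBiproduct T ι ⟶ T k) :
      (linearCoyonedaHomOfElem Φ (basisBiproductElem Φ b)).app (T k) g =
        (b k).equivFun.symm (r g) := by
    rw [linearCoyonedaHomOfElem_basisBiproductElem_app_apply, Fintype.sum_sigma,
      Fintype.sum_eq_single k fun k' hk' => Finset.sum_eq_zero fun j _ => by
        rw [hvanish g ⟨k', j⟩ hk', Functor.map_zero]; rfl]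
    simp [r, Functor.end_smul_eq_map]
  have hbij := (b k).equivFun.symm.bijective.comp hr
  exact (funext hfactor).symm ▸ hbij

theorem isIso_linearCoyonedaHomOfElem_basisBiproductElem
    (hsemisimple : ∀ X : C, IsFiniteBiproductOfSimples X)
    (hT : ∀ k k', Nonempty (T k ≅ T k') → k = k')
    (hsupp : ∀ S : C, Simple S → ¬ Subsingleton (Φ.obj S) → ∃ k, Nonempty (S ≅ T k)) :
    IsIso (linearCoyonedaHomOfElem Φ (basisBiproductElem Φ b)) := by
  refine NatTrans.isIso_of_isIso_app_simple hsemisimple _ fun S hS => ?_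
  by_cases hST : ∃ k, Nonempty (S ≅ T k)
  · obtain ⟨k, ⟨e⟩⟩ := hST
    rw [NatTrans.isIso_app_iff_of_iso _ e, ConcreteCategory.isIso_iff_bijective]
    exact bijective_linearCoyonedaHomOfElem_basisBiproductElem_app Φ b hT k
  · simp only [not_exists, not_nonempty_iff] at hST
    have : Subsingleton (Φ.obj S) := by
      by_contra h
      obtain ⟨k, ⟨e⟩⟩ := hsupp S hS h
      exact (hST k).false e
    have : Subsingleton (((linearCoyoneda F C).obj (op (sigmaBiproduct T ι))).obj S) :=
      subsingleton_sigmaBiproduct_hom fun k => ⟨fun e => (hST k).false e.symm⟩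
    rw [ConcreteCategory.isIso_iff_bijective]
    exact ⟨Function.injective_of_subsingleton _, fun y => ⟨0, Subsingleton.elim _ _⟩⟩

end BasisBiproduct

end Linear

section Corepresentability

variable {F : Type w} [Field F] {C : Type} [Category.{v} C] [Preadditive C] [Linear F C]
  [HasKernels C] [HasFiniteBiproducts C] (Φ : C ⥤ ModuleCat.{v} F)

theorem finite_support_of_iso_linearCoyoneda {N : C}
    (hN : IsFiniteBiproductOfSimples N)
    (e : Φ ≅ (linearCoyoneda F C).obj (op N)) :
    ∃ s : Finset C, ∀ S : C, Simple S → ¬ Subsingleton (Φ.obj S) → ∃ T ∈ s, Nonempty (S ≅ T) := by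
  classical
  obtain ⟨n, f, hf, ⟨eN⟩⟩ := hN
  refine ⟨Finset.univ.image f, fun S hS hΦS => ?_⟩
  obtain ⟨g, hg⟩ : ∃ g : N ⟶ S, g ≠ 0 := by
    by_contra! h
    exact hΦS ((e.app S).toLinearEquiv.toEquiv.subsingleton_congr.mpr
      ⟨fun g g' => (h g).trans (h g').symm⟩)
  have := hf
  obtain ⟨j, ⟨i⟩⟩ := exists_iso_of_biproduct_hom_ne_zero f (g := eN.inv ≫ g) (by simpa using hg)
  exact ⟨f j, Finset.mem_image_of_mem f (Finset.mem_univ j), ⟨i.symm⟩⟩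

variable [Φ.Additive] [Φ.Linear F]

theorem exists_iso_linearCoyoneda_of_finite_support
    (hsemisimple : ∀ X : C, IsFiniteBiproductOfSimples X)
    (hsupp : ∃ s : Finset C,
      ∀ S : C, Simple S → ¬ Subsingleton (Φ.obj S) → ∃ T ∈ s, Nonempty (S ≅ T))
    (hdim : ∀ S : C, Simple S → FiniteDimensional F (Φ.obj S)) :
    ∃ N : C, Nonempty (Φ ≅ (linearCoyoneda F C).obj (op N)) := by
  obtain ⟨s, hs⟩ := hsupp
  obtain ⟨R, hRsupp, hRcover, hRinj⟩ := exists_finset_pairwise_nonIso_cover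
    (fun S => Simple S ∧ ¬ Subsingleton (Φ.obj S))
    (fun e ⟨hS, hΦS⟩ => ⟨Simple.of_iso e.symm,
      fun h => hΦS ((Φ.mapIso e).toLinearEquiv.toEquiv.subsingleton_congr.mpr h)⟩)
    (fun S ⟨hS, hΦS⟩ => hs S hS hΦS)
  have (T : R) : Simple T.1 := (hRsupp T.1 T.2).1
  have (T : R) : FiniteDimensional F (Φ.obj T.1) := hdim _ inferInstance
  have (T : R) : Module.Finite (End T.1) (Φ.obj T.1) :=
    Module.Finite.of_restrictScalars_finite F _ _
  let b (T : R) := Module.finBasis (End T.1) (Φ.obj T.1)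
  have := isIso_linearCoyonedaHomOfElem_basisBiproductElem Φ b hsemisimple
    (fun T T' h => Subtype.ext (hRinj _ T.2 _ T'.2 h))
    (fun S hS hΦS => let ⟨T, hT, e⟩ := hRcover S ⟨hS, hΦS⟩; ⟨⟨T, hT⟩, e⟩)
  exact ⟨_, ⟨(asIso (linearCoyonedaHomOfElem Φ (basisBiproductElem Φ b))).symm⟩⟩

end Corepresentability

end CategoryTheory

/-- Let `F` be a field and `A` an `F`-linear abelian semisimple category
(pseudo-abelian, every object a finite direct sum of simple objects, with finite-dimensional
Hom-spaces).  An `F`-linear functor `Φ : A ⥤ Vec_F` is corepresentable if and only if its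
support (the isomorphism classes of simple objects `S` with `Φ S ≠ 0`) is finite and
`dim_F Φ(S) < ∞` for every simple `S`. -/
theorem stmt0 {F : Type} [Field F] {A : Type} [Category.{0} A]
    [Preadditive A] [Linear F A] [Abelian A] [HasFiniteBiproducts A]
    (hsemisimple : ∀ X : A, ∃ (n : ℕ) (f : Fin n → A),
      (∀ i, Simple (f i)) ∧ Nonempty (X ≅ ⨁ f))
    (hfin : ∀ X Y : A, FiniteDimensional F (X ⟶ Y))
    (Φ : A ⥤ ModuleCat.{0} F) [Φ.Additive] [Φ.Linear F] :
    (∃ N : A, Nonempty (Φ ≅ (linearCoyoneda F A).obj (op N))) ↔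
      ((∃ s : Finset A, ∀ S : A, Simple S → ¬ Subsingleton (Φ.obj S) →
          ∃ T ∈ s, Nonempty (S ≅ T)) ∧
        ∀ S : A, Simple S → FiniteDimensional F (Φ.obj S)) := by
  constructor
  · rintro ⟨N, ⟨e⟩⟩
    refine ⟨finite_support_of_iso_linearCoyoneda Φ (hsemisimple N) e, fun S _ => ?_⟩
    have : FiniteDimensional F (((linearCoyoneda F A).obj (op N)).obj S) := hfin N S
    exact Module.Finite.equiv (e.app S).symm.toLinearEquiv
  · rintro ⟨hsupp, hdim⟩
    exact exists_iso_linearCoyoneda_of_finite_support Φ hsemisimple hsupp hdim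
end

section
/- Let F be a field and T : A → B an F-linear fully faithful functor between F-linear abelian semisimple categories in which every Hom-space is finite dimensional. Then T admits a left adjoint T_♯ and a right adjoint T_*. -/
/-!
Whether `T` has a right adjoint can be tested objectwise: `Hom(T -, Y)` must be representable,
and the objects `Y` for which it is are closed under isomorphisms and finite products. So only
simple `W` matter. If `W ≅ T S`, full faithfulness makes `S` represent `Hom(T -, W)`. Otherwise
`Hom(T X, W) = 0` for every `X`, and `0` represents it: `T` sends simples to simples (their
nonzero endomorphisms are invertible, which in a semisimple category forces simplicity), so by
Schur a nonzero map `T X ⟶ W` would identify `W` with `T` of a simple summand of `X`.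
The left adjoint is dual.
-/

open CategoryTheory CategoryTheory.Limits

universe v

namespace CategoryTheory

section Biproduct

variable {C : Type*} [Category* C] [HasZeroMorphisms C] {J : Type*}

lemma Limits.biproduct.exists_ι_comp_ne_zero {f : J → C} [HasBiproduct f] {Z : C}
    {h : ⨁ f ⟶ Z} (hh : h ≠ 0) : ∃ j, biproduct.ι f j ≫ h ≠ 0 := by
  by_contra! H
  exact hh (biproduct.hom_ext' _ _ fun j => by simp [H j])

lemma Limits.biproduct.exists_comp_π_ne_zero {f : J → C} [HasBiproduct f] {Z : C}
    {h : Z ⟶ ⨁ f} (hh : h ≠ 0) : ∃ j, h ≫ biproduct.π f j ≠ 0 := by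
  by_contra! H
  exact hh (biproduct.hom_ext _ _ fun j => by simp [H j])

end Biproduct

section Simple

variable {C : Type*} [Category* C] [Preadditive C]

lemma Retract.isIso_i_of_forall_isIso {X Y : C} (h : Retract X Y) (hX : 𝟙 X ≠ 0)
    (hY : ∀ e : Y ⟶ Y, e ≠ 0 → IsIso e) : IsIso h.i := by
  have hne : h.r ≫ h.i ≠ 0 := fun h0 => hX <| calc
    𝟙 X = h.i ≫ (h.r ≫ h.i) ≫ h.r := by simp
    _ = 0 := by simp [h0]
  have := hY _ hne
  exact ⟨h.r, h.retract, (cancel_epi (h.r ≫ h.i)).mp (by simp)⟩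

lemma simple_of_iso_biproduct_of_forall_isIso {J : Type*} {g : J → C} [HasBiproduct g]
    [∀ j, Simple (g j)] {Z : C} (ε : Z ≅ ⨁ g) (hZ : 𝟙 Z ≠ 0)
    (hend : ∀ e : Z ⟶ Z, e ≠ 0 → IsIso e) : Simple Z := by
  obtain ⟨j, -⟩ := biproduct.exists_ι_comp_ne_zero (h := ε.inv)
    fun h0 => hZ (by simpa [h0] using ε.hom_inv_id.symm)
  let r : Retract (g j) Z := ⟨biproduct.ι g j ≫ ε.inv, ε.hom ≫ biproduct.π g j, by simp⟩
  have := r.isIso_i_of_forall_isIso (id_nonzero _) hend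
  exact Simple.of_iso (asIso r.i).symm

variable [HasKernels C] {D : Type*} [Category* D] [Preadditive D] [HasFiniteBiproducts D]

lemma Functor.simple_obj (T : C ⥤ D) [T.Full] [T.Faithful] (S : C) [Simple S]
    (hTS : ∃ (n : ℕ) (g : Fin n → D), (∀ i, Simple (g i)) ∧ Nonempty (T.obj S ≅ ⨁ g)) :
    Simple (T.obj S) := by
  obtain ⟨n, g, hg, ⟨ε⟩⟩ := hTS
  refine simple_of_iso_biproduct_of_forall_isIso ε
    (fun h0 => id_nonzero S (T.map_injective (by simp [h0]))) fun e he => ?_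
  have hp : T.preimage e ≠ 0 := fun h0 => he (by simpa [h0] using (T.map_preimage e).symm)
  have := isIso_of_hom_simple hp
  rw [← T.map_preimage e]
  infer_instance

end Simple

section EssImage

variable {C : Type*} [Category* C] [Preadditive C] [HasKernels C] [HasFiniteBiproducts C]
  {D : Type*} [Category* D] [Preadditive D] [HasFiniteBiproducts D]
  (T : C ⥤ D) [T.Additive] [T.Full] [T.Faithful]
  (hC : ∀ X : C, ∃ (n : ℕ) (f : Fin n → C), (∀ i, Simple (f i)) ∧ Nonempty (X ≅ ⨁ f))
  (hD : ∀ Y : D, ∃ (n : ℕ) (f : Fin n → D), (∀ i, Simple (f i)) ∧ Nonempty (Y ≅ ⨁ f))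

include hC hD in
lemma Functor.exists_iso_biproduct_simple_obj (X : C) :
    ∃ (n : ℕ) (f : Fin n → C), (∀ i, Simple (T.obj (f i))) ∧
      Nonempty (T.obj X ≅ ⨁ fun i => T.obj (f i)) := by
  obtain ⟨n, f, hf, ⟨ε⟩⟩ := hC X
  exact ⟨n, f, fun i => T.simple_obj (f i) (hD _), ⟨T.mapIso ε ≪≫ T.mapBiproduct f⟩⟩

variable [HasKernels D]

include hC hD in
lemma Functor.mem_essImage_of_obj_hom_ne_zero {X : C} {W : D} [Simple W] {h : T.obj X ⟶ W}
    (hh : h ≠ 0) : T.essImage W := by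
  obtain ⟨n, f, hf, ⟨e⟩⟩ := T.exists_iso_biproduct_simple_obj hC hD X
  obtain ⟨j, hj⟩ := biproduct.exists_ι_comp_ne_zero (h := e.inv ≫ h) (by simpa using hh)
  have := isIso_of_hom_simple hj
  exact ⟨f j, ⟨asIso (biproduct.ι (fun i => T.obj (f i)) j ≫ e.inv ≫ h)⟩⟩

include hC hD in
lemma Functor.mem_essImage_of_hom_obj_ne_zero {X : C} {W : D} [Simple W] {h : W ⟶ T.obj X}
    (hh : h ≠ 0) : T.essImage W := by
  obtain ⟨n, f, hf, ⟨e⟩⟩ := T.exists_iso_biproduct_simple_obj hC hD X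
  obtain ⟨j, hj⟩ := biproduct.exists_comp_π_ne_zero (h := h ≫ e.hom) (by simpa using hh)
  have := isIso_of_hom_simple hj
  exact ⟨f j, ⟨(asIso ((h ≫ e.hom) ≫ biproduct.π (fun i => T.obj (f i)) j)).symm⟩⟩

end EssImage

section PartialAdjoint

variable {C : Type*} [Category.{v} C] {D : Type*} [Category.{v} D] {F : C ⥤ D}

lemma Functor.rightAdjointObjIsDefined_of_iso {Y Y' : D} (e : Y ≅ Y')
    (h : F.rightAdjointObjIsDefined Y) : F.rightAdjointObjIsDefined Y' :=
  have : (F.op ⋙ yoneda.obj Y).IsRepresentable := h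
  isRepresentable_of_natIso _ (isoWhiskerLeft F.op (yoneda.mapIso e))

lemma Functor.leftAdjointObjIsDefined_of_iso {Y Y' : D} (e : Y ≅ Y')
    (h : F.leftAdjointObjIsDefined Y) : F.leftAdjointObjIsDefined Y' :=
  have : (F ⋙ coyoneda.obj (.op Y)).IsCorepresentable := h
  corepresentable_of_natIso _ (isoWhiskerLeft F (coyoneda.mapIso e.symm.op))

variable (F) [F.Full] [F.Faithful]

lemma Functor.rightAdjointObjIsDefined_obj (X : C) : F.rightAdjointObjIsDefined (F.obj X) :=
  Functor.RepresentableBy.isRepresentable (Y := X)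
    { homEquiv := (FullyFaithful.ofFullyFaithful F).homEquiv
      homEquiv_comp := by simp }

lemma Functor.leftAdjointObjIsDefined_obj (X : C) : F.leftAdjointObjIsDefined (F.obj X) :=
  Functor.CorepresentableBy.isCorepresentable (X := X)
    { homEquiv := (FullyFaithful.ofFullyFaithful F).homEquiv
      homEquiv_comp := by simp }

omit [F.Full] [F.Faithful]

variable {F}
variable [HasZeroMorphisms C] [HasZeroMorphisms D] [HasZeroObject C]

open ZeroObject in
lemma Functor.rightAdjointObjIsDefined_of_forall_eq_zero {W : D}
    (h : ∀ (X : C) (f : F.obj X ⟶ W), f = 0) : F.rightAdjointObjIsDefined W :=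
  Functor.RepresentableBy.isRepresentable (Y := (0 : C))
    { homEquiv :=
        { toFun := fun _ => (0 : F.obj _ ⟶ W)
          invFun := fun _ => 0
          left_inv := fun _ => (isZero_zero C).eq_of_tgt _ _
          right_inv := fun f => (h _ f).symm }
      homEquiv_comp := by simp }

open ZeroObject in
lemma Functor.leftAdjointObjIsDefined_of_forall_eq_zero {W : D}
    (h : ∀ (X : C) (f : W ⟶ F.obj X), f = 0) : F.leftAdjointObjIsDefined W :=
  Functor.CorepresentableBy.isCorepresentable (X := (0 : C))
    { homEquiv :=
        { toFun := fun _ => (0 : W ⟶ F.obj _)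
          invFun := fun _ => 0
          left_inv := fun _ => (isZero_zero C).eq_of_src _ _
          right_inv := fun f => (h _ f).symm }
      homEquiv_comp := by simp }

end PartialAdjoint

section Semisimple

variable {C : Type*} [Category.{v} C] [Preadditive C] [HasKernels C] [HasFiniteBiproducts C]
  [HasZeroObject C]
  {D : Type*} [Category.{v} D] [Preadditive D] [HasKernels D] [HasFiniteBiproducts D]
  (T : C ⥤ D) [T.Additive] [T.Full] [T.Faithful]
  (hC : ∀ X : C, ∃ (n : ℕ) (f : Fin n → C), (∀ i, Simple (f i)) ∧ Nonempty (X ≅ ⨁ f))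
  (hD : ∀ Y : D, ∃ (n : ℕ) (f : Fin n → D), (∀ i, Simple (f i)) ∧ Nonempty (Y ≅ ⨁ f))
include hC hD

lemma Functor.rightAdjointObjIsDefined_of_simple (W : D) [Simple W] :
    T.rightAdjointObjIsDefined W := by
  by_cases hW : T.essImage W
  · exact rightAdjointObjIsDefined_of_iso hW.getIso (T.rightAdjointObjIsDefined_obj _)
  · exact rightAdjointObjIsDefined_of_forall_eq_zero fun X h =>
      by_contra fun hh => hW (T.mem_essImage_of_obj_hom_ne_zero hC hD hh)

lemma Functor.leftAdjointObjIsDefined_of_simple (W : D) [Simple W] :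
    T.leftAdjointObjIsDefined W := by
  by_cases hW : T.essImage W
  · exact leftAdjointObjIsDefined_of_iso hW.getIso (T.leftAdjointObjIsDefined_obj _)
  · exact leftAdjointObjIsDefined_of_forall_eq_zero fun X h =>
      by_contra fun hh => hW (T.mem_essImage_of_hom_obj_ne_zero hC hD hh)

lemma Functor.isLeftAdjoint_of_semisimple : T.IsLeftAdjoint := by
  refine isLeftAdjoint_of_rightAdjointObjIsDefined_eq_top (eq_top_iff.mpr fun Y _ => ?_)
  obtain ⟨n, g, hg, ⟨ε⟩⟩ := hD Y
  exact rightAdjointObjIsDefined_of_iso ε.symm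
    (rightAdjointObjIsDefined_of_isLimit (biproduct.isLimit g)
      fun j => T.rightAdjointObjIsDefined_of_simple hC hD (g j.as))

lemma Functor.isRightAdjoint_of_semisimple : T.IsRightAdjoint := by
  refine isRightAdjoint_of_leftAdjointObjIsDefined_eq_top (eq_top_iff.mpr fun Y _ => ?_)
  obtain ⟨n, g, hg, ⟨ε⟩⟩ := hD Y
  exact leftAdjointObjIsDefined_of_iso ε.symm
    (leftAdjointObjIsDefined_of_isColimit (biproduct.isColimit g)
      fun j => T.leftAdjointObjIsDefined_of_simple hC hD (g j.as))

end Semisimple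

end CategoryTheory

theorem stmt1_general
    {A : Type} [Category.{0} A] [Preadditive A] [Abelian A] [HasFiniteBiproducts A]
    {B : Type} [Category.{0} B] [Preadditive B] [Abelian B] [HasFiniteBiproducts B]
    (hA : ∀ X : A, ∃ (n : ℕ) (f : Fin n → A), (∀ i, Simple (f i)) ∧ Nonempty (X ≅ ⨁ f))
    (hB : ∀ X : B, ∃ (n : ℕ) (f : Fin n → B), (∀ i, Simple (f i)) ∧ Nonempty (X ≅ ⨁ f))
    (T : A ⥤ B) [T.Additive] [T.Full] [T.Faithful] :
    T.IsRightAdjoint ∧ T.IsLeftAdjoint :=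
  ⟨T.isRightAdjoint_of_semisimple hA hB, T.isLeftAdjoint_of_semisimple hA hB⟩

/-- Let `F` be a field and `T : A ⥤ B` an `F`-linear fully faithful functor
between `F`-linear abelian semisimple categories (every object a finite direct sum of simples)
in which every Hom-space is finite dimensional.  Then `T` admits a left adjoint `T_♯`
(`T.IsRightAdjoint`) and a right adjoint `T_*` (`T.IsLeftAdjoint`). -/
theorem stmt1 {F : Type} [Field F]
    {A : Type} [Category.{0} A] [Preadditive A] [Linear F A] [Abelian A] [HasFiniteBiproducts A]
    {B : Type} [Category.{0} B] [Preadditive B] [Linear F B] [Abelian B] [HasFiniteBiproducts B]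
    (hA : ∀ X : A, ∃ (n : ℕ) (f : Fin n → A), (∀ i, Simple (f i)) ∧ Nonempty (X ≅ ⨁ f))
    (hB : ∀ X : B, ∃ (n : ℕ) (f : Fin n → B), (∀ i, Simple (f i)) ∧ Nonempty (X ≅ ⨁ f))
    (hfinA : ∀ X Y : A, FiniteDimensional F (X ⟶ Y))
    (hfinB : ∀ X Y : B, FiniteDimensional F (X ⟶ Y))
    (T : A ⥤ B) [T.Additive] [T.Linear F] [T.Full] [T.Faithful] :
    T.IsRightAdjoint ∧ T.IsLeftAdjoint :=
  stmt1_general hA hB T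
end

section
/- Let T : A → B be an F-linear fully faithful functor between F-linear abelian semisimple categories admitting a left adjoint T_♯. For every simple object S of B: if S is not isomorphic to T(S') for any S' in A, then T_♯(S) = 0; if S ≅ T(S') for some S' in A, then T_♯(S) ≅ S'. In particular T_♯(S) is zero or simple. -/
open CategoryTheory CategoryTheory.Limits

/-- In a preadditive category with kernels, idempotent endomorphisms of a simple object
are trivial. -/
lemma simple_trivial_idem {C : Type*} [Category C] [Preadditive C] [HasKernels C]
    {X : C} (hX : Simple X) (x : X ⟶ X) (h : x ≫ x = x) : x = 0 ∨ x = 𝟙 X := by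
  by_cases hx : x = 0
  · exact Or.inl hx
  · right
    haveI := hX
    haveI : IsIso x := isIso_of_hom_simple hx
    have : x ≫ x = x ≫ 𝟙 X := by simpa using h
    exact (cancel_epi x).mp this

/-- If `X` decomposes as a finite biproduct of simples, `𝟙 X ≠ 0`, and all idempotent
endomorphisms of `X` are trivial, then `X` is simple. -/
lemma simple_of_trivial_idem {C : Type*} [Category C] [Preadditive C] [HasFiniteBiproducts C]
    {X : C} (n : ℕ) (f : Fin n → C) (hf : ∀ i, Simple (f i)) (e : X ≅ ⨁ f)
    (h1 : 𝟙 X ≠ 0) (h2 : ∀ x : X ⟶ X, x ≫ x = x → x = 0 ∨ x = 𝟙 X) : Simple X := by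
  match n with
  | 0 =>
    exfalso
    apply h1
    have hz : 𝟙 (⨁ f) = 0 := by
      apply biproduct.hom_ext
      intro i
      exact i.elim0
    calc 𝟙 X = e.hom ≫ 𝟙 (⨁ f) ≫ e.inv := by simp
      _ = 0 := by rw [hz]; simp
  | 1 =>
    haveI := hf 0
    refine Simple.of_iso (X := X) (Y := f 0) ?_
    refine e ≪≫ ⟨biproduct.π f 0, biproduct.ι f 0, ?_, by simp⟩
    apply biproduct.hom_ext
    intro j
    have : j = 0 := Subsingleton.elim _ _
    subst this
    simp
  | (m + 2) =>
    exfalso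
    set x : X ⟶ X := e.hom ≫ biproduct.π f 0 ≫ biproduct.ι f 0 ≫ e.inv with hxdef
    have hidem : x ≫ x = x := by
      simp [hxdef]
    rcases h2 x hidem with h0 | h1'
    · -- then π0 ≫ ι0 = 0, so 𝟙 (f 0) = 0
      have hpi : biproduct.π f 0 ≫ biproduct.ι f 0 = (0 : ⨁ f ⟶ ⨁ f) := by
        have : e.inv ≫ x ≫ e.hom = biproduct.π f 0 ≫ biproduct.ι f 0 := by
          simp [hxdef]
        rw [← this, h0]; simp
      haveI := hf 0
      apply id_nonzero (f 0)
      calc 𝟙 (f 0) = biproduct.ι f 0 ≫ (biproduct.π f 0 ≫ biproduct.ι f 0) ≫ biproduct.π f 0 := by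
            simp
        _ = 0 := by rw [hpi]; simp
    · -- then π0 ≫ ι0 = 𝟙, so 𝟙 (f 1) = 0
      have hpi : biproduct.π f 0 ≫ biproduct.ι f 0 = 𝟙 (⨁ f) := by
        have h' : e.inv ≫ x ≫ e.hom = biproduct.π f 0 ≫ biproduct.ι f 0 := by
          simp [hxdef]
        rw [← h', h1']; simp
      haveI := hf 1
      apply id_nonzero (f 1)
      have hne : (1 : Fin (m + 2)) ≠ 0 := by simp
      calc 𝟙 (f 1) = biproduct.ι f 1 ≫ 𝟙 (⨁ f) ≫ biproduct.π f 1 := by simp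
        _ = biproduct.ι f 1 ≫ (biproduct.π f 0 ≫ biproduct.ι f 0) ≫ biproduct.π f 1 := by
            rw [hpi]
        _ = (biproduct.ι f 1 ≫ biproduct.π f 0) ≫ biproduct.ι f 0 ≫ biproduct.π f 1 := by simp
        _ = 0 := by rw [biproduct.ι_π_ne f hne]; simp

/-- A fully faithful additive functor into a semisimple category preserves simplicity. -/
lemma simple_map {A B : Type*} [Category A] [Category B] [Preadditive A] [Preadditive B]
    [HasKernels A] [HasFiniteBiproducts B]
    (hB : ∀ X : B, ∃ (n : ℕ) (f : Fin n → B), (∀ i, Simple (f i)) ∧ Nonempty (X ≅ ⨁ f))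
    (T : A ⥤ B) [T.Additive] [T.Full] [T.Faithful]
    {X : A} (hX : Simple X) : Simple (T.obj X) := by
  obtain ⟨n, f, hf, ⟨e⟩⟩ := hB (T.obj X)
  refine simple_of_trivial_idem n f hf e ?_ ?_
  · intro h
    haveI := hX
    apply id_nonzero X
    apply T.map_injective
    rw [T.map_id, T.map_zero, h]
  · intro x hx
    obtain ⟨y, rfl⟩ := T.map_surjective x
    have hy : y ≫ y = y := T.map_injective (by rw [T.map_comp]; exact hx)
    rcases simple_trivial_idem hX y hy with h | h
    · left; rw [h, T.map_zero]
    · right; rw [h, T.map_id]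

/-- A fully faithful additive functor from a semisimple category reflects simplicity. -/
lemma simple_reflect {A B : Type*} [Category A] [Category B] [Preadditive A] [Preadditive B]
    [HasFiniteBiproducts A] [HasKernels B]
    (hA : ∀ X : A, ∃ (n : ℕ) (f : Fin n → A), (∀ i, Simple (f i)) ∧ Nonempty (X ≅ ⨁ f))
    (T : A ⥤ B) [T.Additive] [T.Full] [T.Faithful]
    {X : A} (hX : Simple (T.obj X)) : Simple X := by
  obtain ⟨n, f, hf, ⟨e⟩⟩ := hA X
  refine simple_of_trivial_idem n f hf e ?_ ?_
  · intro h
    haveI := hX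
    apply id_nonzero (T.obj X)
    rw [← T.map_id, h, T.map_zero]
  · intro y hy
    have hx : T.map y ≫ T.map y = T.map y := by rw [← T.map_comp, hy]
    rcases simple_trivial_idem hX (T.map y) hx with h | h
    · left; apply T.map_injective; rw [h, T.map_zero]
    · right; apply T.map_injective; rw [h, T.map_id]

/-- Let `T : A ⥤ B` be an `F`-linear fully faithful functor between `F`-linear
abelian semisimple categories, admitting a left adjoint `T_♯ = L` (`adj : L ⊣ T`).  For every
simple object `S` of `B`: if `S` is not isomorphic to any `T S'`, then `L S = 0`; if
`S ≅ T S'`, then `L S ≅ S'`.  In particular `L S` is zero or simple. -/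
theorem stmt2 {F : Type} [Field F]
    {A : Type} [Category.{0} A] [Preadditive A] [Linear F A] [Abelian A] [HasFiniteBiproducts A]
    {B : Type} [Category.{0} B] [Preadditive B] [Linear F B] [Abelian B] [HasFiniteBiproducts B]
    (hA : ∀ X : A, ∃ (n : ℕ) (f : Fin n → A), (∀ i, Simple (f i)) ∧ Nonempty (X ≅ ⨁ f))
    (hB : ∀ X : B, ∃ (n : ℕ) (f : Fin n → B), (∀ i, Simple (f i)) ∧ Nonempty (X ≅ ⨁ f))
    (hfinA : ∀ X Y : A, FiniteDimensional F (X ⟶ Y))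
    (hfinB : ∀ X Y : B, FiniteDimensional F (X ⟶ Y))
    (T : A ⥤ B) [T.Additive] [T.Linear F] [T.Full] [T.Faithful]
    (L : B ⥤ A) (adj : L ⊣ T)
    (S : B) (hS : Simple S) :
    ((¬ ∃ S' : A, Nonempty (S ≅ T.obj S')) → IsZero (L.obj S)) ∧
      (∀ S' : A, (S ≅ T.obj S') → Nonempty (L.obj S ≅ S')) ∧
      (IsZero (L.obj S) ∨ Simple (L.obj S)) := by
  haveI := hS
  -- Part 2 first.
  have part2 : ∀ S' : A, (S ≅ T.obj S') → Nonempty (L.obj S ≅ S') := by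
    intro S' e
    refine ⟨⟨(adj.homEquiv S S').symm e.hom, T.preimage (e.inv ≫ adj.unit.app S), ?_, ?_⟩⟩
    · -- u ≫ v = 𝟙
      apply (adj.homEquiv S (L.obj S)).injective
      rw [Adjunction.homEquiv_unit, Adjunction.homEquiv_unit]
      rw [T.map_comp, T.map_preimage, T.map_id]
      have h1 : adj.unit.app S ≫ T.map ((adj.homEquiv S S').symm e.hom) = e.hom := by
        have := (adj.homEquiv S S').apply_symm_apply e.hom
        rwa [Adjunction.homEquiv_unit] at this
      rw [← Category.assoc, h1]
      simp
    · -- v ≫ u = 𝟙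
      apply T.map_injective
      rw [T.map_comp, T.map_preimage, T.map_id]
      have h1 : adj.unit.app S ≫ T.map ((adj.homEquiv S S').symm e.hom) = e.hom := by
        have := (adj.homEquiv S S').apply_symm_apply e.hom
        rwa [Adjunction.homEquiv_unit] at this
      rw [Category.assoc, h1]
      simp
  have part1 : (¬ ∃ S' : A, Nonempty (S ≅ T.obj S')) → IsZero (L.obj S) := by
    intro hne
    obtain ⟨n, f, hf, ⟨e⟩⟩ := hA (L.obj S)
    match n, f, hf, e with
    | 0, f, hf, e =>
      have hz : IsZero (⨁ f) := by
        rw [IsZero.iff_id_eq_zero]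
        apply biproduct.hom_ext
        intro i
        exact i.elim0
      exact hz.of_iso e
    | (m + 1), f, hf, e =>
      exfalso
      apply hne
      haveI := hf 0
      have hg : (e.hom ≫ biproduct.π f 0 : L.obj S ⟶ f 0) ≠ 0 := by
        intro h0
        apply id_nonzero (f 0)
        calc 𝟙 (f 0) = biproduct.ι f 0 ≫ e.inv ≫ (e.hom ≫ biproduct.π f 0) := by simp
          _ = 0 := by rw [h0]; simp
      set g : L.obj S ⟶ f 0 := e.hom ≫ biproduct.π f 0
      have hh : (adj.homEquiv S (f 0)) g ≠ 0 := by
        intro h0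
        apply hg
        have : (adj.homEquiv S (f 0)) (0 : L.obj S ⟶ f 0) = 0 := by
          rw [Adjunction.homEquiv_unit, T.map_zero, Limits.comp_zero]
        exact (adj.homEquiv S (f 0)).injective (by rw [h0, this])
      haveI : Simple (T.obj (f 0)) := simple_map hB T (hf 0)
      haveI : IsIso ((adj.homEquiv S (f 0)) g) := isIso_of_hom_simple hh
      exact ⟨f 0, ⟨asIso ((adj.homEquiv S (f 0)) g)⟩⟩
  refine ⟨part1, part2, ?_⟩
  by_cases hex : ∃ S' : A, Nonempty (S ≅ T.obj S')
  · right
    obtain ⟨S', ⟨e⟩⟩ := hex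
    obtain ⟨i⟩ := part2 S' e
    have hTS' : Simple (T.obj S') := Simple.of_iso e.symm
    have hS' : Simple S' := simple_reflect hA T hTS'
    exact Simple.of_iso i
  · left
    exact part1 hex
end

section
/- Let T : A → B be an F-linear fully faithful functor between F-linear abelian semisimple categories, with left adjoint T_♯ and right adjoint T_*. Then the canonical natural transformation T_* ⇒ T_♯, obtained by full faithfulness of T from the composite T T_* ⇒ Id_B ⇒ T T_♯ of the counit of (T,T_*) and the unit of (T_♯,T), is an isomorphism. -/
open CategoryTheory CategoryTheory.Limits

section Aux

variable {C : Type} [Category.{0} C] [Preadditive C] [Abelian C] [HasFiniteBiproducts C]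

/-- In a semisimple abelian category, every epimorphism onto a simple object splits. -/
lemma aux_split_epi_simple
    (hC : ∀ X : C, ∃ (n : ℕ) (f : Fin n → C), (∀ i, Simple (f i)) ∧ Nonempty (X ≅ ⨁ f))
    {X S : C} [Simple S] (f : X ⟶ S) [Epi f] : ∃ s : S ⟶ X, s ≫ f = 𝟙 S := by
  have hf : f ≠ 0 := by
    intro h
    have h1 : f ≫ (𝟙 S) = f ≫ (0 : S ⟶ S) := by rw [h]; simp
    exact id_nonzero S ((cancel_epi f).mp h1)
  obtain ⟨n, g, hg, ⟨e⟩⟩ := hC X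
  by_cases hj : ∃ j, biproduct.ι g j ≫ e.inv ≫ f ≠ 0
  · obtain ⟨j, hj⟩ := hj
    haveI := hg j
    haveI : IsIso (biproduct.ι g j ≫ e.inv ≫ f) := isIso_of_hom_simple hj
    refine ⟨inv (biproduct.ι g j ≫ e.inv ≫ f) ≫ biproduct.ι g j ≫ e.inv, ?_⟩
    rw [Category.assoc, Category.assoc, IsIso.inv_comp_eq]
    simp
  · exfalso
    push_neg at hj
    apply hf
    have h0 : e.inv ≫ f = 0 := biproduct.hom_ext' _ _ (fun j => by
      rw [← Category.assoc, Category.assoc]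
      rw [hj j, comp_zero])
    calc f = e.hom ≫ e.inv ≫ f := by rw [Iso.hom_inv_id_assoc]
    _ = 0 := by rw [h0, comp_zero]

/-- In a semisimple abelian category, every monomorphism from a simple object splits. -/
lemma aux_split_mono_simple
    (hC : ∀ X : C, ∃ (n : ℕ) (f : Fin n → C), (∀ i, Simple (f i)) ∧ Nonempty (X ≅ ⨁ f))
    {S X : C} [Simple S] (f : S ⟶ X) [Mono f] : ∃ r : X ⟶ S, f ≫ r = 𝟙 S := by
  have hf : f ≠ 0 := by
    intro h
    have h1 : (𝟙 S) ≫ f = (0 : S ⟶ S) ≫ f := by rw [h]; simp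
    exact id_nonzero S ((cancel_mono f).mp h1)
  obtain ⟨n, g, hg, ⟨e⟩⟩ := hC X
  by_cases hj : ∃ j, (f ≫ e.hom) ≫ biproduct.π g j ≠ 0
  · obtain ⟨j, hj⟩ := hj
    haveI := hg j
    haveI : IsIso ((f ≫ e.hom) ≫ biproduct.π g j) := isIso_of_hom_simple hj
    refine ⟨e.hom ≫ biproduct.π g j ≫ inv ((f ≫ e.hom) ≫ biproduct.π g j), ?_⟩
    rw [← Category.assoc, ← Category.assoc]
    exact IsIso.hom_inv_id _
  · exfalso
    push_neg at hj
    apply hf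
    have h0 : f ≫ e.hom = 0 := biproduct.hom_ext _ _ (fun j => by rw [hj j, zero_comp])
    calc f = (f ≫ e.hom) ≫ e.inv := by simp
    _ = 0 := by rw [h0, zero_comp]

/-- Morphisms from a simple object lift along epimorphisms. -/
lemma aux_lift_simple
    (hC : ∀ X : C, ∃ (n : ℕ) (f : Fin n → C), (∀ i, Simple (f i)) ∧ Nonempty (X ≅ ⨁ f))
    {X Y S : C} [Simple S] (f : X ⟶ Y) [Epi f] (u : S ⟶ Y) : ∃ t : S ⟶ X, t ≫ f = u := by
  obtain ⟨s, hs⟩ := aux_split_epi_simple hC (pullback.snd f u)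
  refine ⟨s ≫ pullback.fst f u, ?_⟩
  rw [Category.assoc, pullback.condition, ← Category.assoc, hs, Category.id_comp]

/-- Morphisms to a simple object extend along monomorphisms. -/
lemma aux_extend_simple
    (hC : ∀ X : C, ∃ (n : ℕ) (f : Fin n → C), (∀ i, Simple (f i)) ∧ Nonempty (X ≅ ⨁ f))
    {X Y S : C} [Simple S] (f : X ⟶ Y) [Mono f] (u : X ⟶ S) : ∃ c : Y ⟶ S, f ≫ c = u := by
  obtain ⟨r, hr⟩ := aux_split_mono_simple hC (pushout.inr f u)
  refine ⟨pushout.inl f u ≫ r, ?_⟩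
  rw [← Category.assoc, pushout.condition, Category.assoc, hr, Category.comp_id]

/-- In a semisimple abelian category, every epimorphism splits. -/
lemma aux_split_epi
    (hC : ∀ X : C, ∃ (n : ℕ) (f : Fin n → C), (∀ i, Simple (f i)) ∧ Nonempty (X ≅ ⨁ f))
    {X Y : C} (f : X ⟶ Y) [Epi f] : ∃ s : Y ⟶ X, s ≫ f = 𝟙 Y := by
  obtain ⟨n, g, hg, ⟨e⟩⟩ := hC Y
  have ht : ∀ j, ∃ t : g j ⟶ X, t ≫ f = biproduct.ι g j ≫ e.inv := fun j => by
    haveI := hg j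
    exact aux_lift_simple hC f (biproduct.ι g j ≫ e.inv)
  choose t ht using ht
  refine ⟨e.hom ≫ biproduct.desc t, ?_⟩
  have h1 : biproduct.desc t ≫ f = e.inv := biproduct.hom_ext' _ _ (fun j => by
    rw [biproduct.ι_desc_assoc, ht])
  rw [Category.assoc, h1, e.hom_inv_id]

/-- In a semisimple abelian category, every monomorphism splits. -/
lemma aux_split_mono
    (hC : ∀ X : C, ∃ (n : ℕ) (f : Fin n → C), (∀ i, Simple (f i)) ∧ Nonempty (X ≅ ⨁ f))
    {X Y : C} (f : X ⟶ Y) [Mono f] : ∃ r : Y ⟶ X, f ≫ r = 𝟙 X := by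
  obtain ⟨n, g, hg, ⟨e⟩⟩ := hC X
  have hc : ∀ j, ∃ c : Y ⟶ g j, f ≫ c = e.hom ≫ biproduct.π g j := fun j => by
    haveI := hg j
    exact aux_extend_simple hC f (e.hom ≫ biproduct.π g j)
  choose c hc using hc
  refine ⟨biproduct.lift c ≫ e.inv, ?_⟩
  have h1 : f ≫ biproduct.lift c = e.hom := biproduct.hom_ext _ _ (fun j => by
    rw [Category.assoc, biproduct.lift_π, hc])
  rw [← Category.assoc, h1, e.hom_inv_id]

end Aux

/-- Let `T : A ⥤ B` be an `F`-linear fully faithful functor between `F`-linear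
abelian semisimple categories, with left adjoint `L = T_♯` and right adjoint `R = T_*`.
Then the canonical natural transformation `T_* ⇒ T_♯`, obtained by full faithfulness of `T`
from the composite `T T_* ⇒ Id_B ⇒ T T_♯` of the counit of `(T, T_*)` and the unit of
`(T_♯, T)`, is an isomorphism (we state that each component is an isomorphism). -/
theorem stmt3 {F : Type} [Field F]
    {A : Type} [Category.{0} A] [Preadditive A] [Linear F A] [Abelian A] [HasFiniteBiproducts A]
    {B : Type} [Category.{0} B] [Preadditive B] [Linear F B] [Abelian B] [HasFiniteBiproducts B]
    (hA : ∀ X : A, ∃ (n : ℕ) (f : Fin n → A), (∀ i, Simple (f i)) ∧ Nonempty (X ≅ ⨁ f))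
    (hB : ∀ X : B, ∃ (n : ℕ) (f : Fin n → B), (∀ i, Simple (f i)) ∧ Nonempty (X ≅ ⨁ f))
    (hfinA : ∀ X Y : A, FiniteDimensional F (X ⟶ Y))
    (hfinB : ∀ X Y : B, FiniteDimensional F (X ⟶ Y))
    (T : A ⥤ B) [T.Additive] [T.Linear F] [T.Full] [T.Faithful]
    (L : B ⥤ A) (adjL : L ⊣ T) (R : B ⥤ A) (adjR : T ⊣ R) (X : B) :
    IsIso (T.preimage (adjR.counit.app X ≫ adjL.unit.app X)) := by
  set ε : T.obj (R.obj X) ⟶ X := adjR.counit.app X with hεdef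
  set η : X ⟶ T.obj (L.obj X) := adjL.unit.app X with hηdef
  -- adjunction helpers
  have injR : ∀ {a : A} (u : a ⟶ R.obj X), T.map u ≫ ε = 0 → u = 0 := by
    intro a u h
    apply (adjR.homEquiv a X).symm.injective
    rw [Adjunction.homEquiv_counit, Adjunction.homEquiv_counit]
    simp only [Functor.map_zero, zero_comp]
    exact h
  have injL : ∀ {a : A} (u : L.obj X ⟶ a), η ≫ T.map u = 0 → u = 0 := by
    intro a u h
    apply (adjL.homEquiv X a).injective
    rw [Adjunction.homEquiv_unit, Adjunction.homEquiv_unit]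
    simp only [Functor.map_zero, comp_zero]
    exact h
  have surjR : ∀ {a : A} (u : T.obj a ⟶ X), u = T.map ((adjR.homEquiv a X) u) ≫ ε := by
    intro a u
    conv_lhs => rw [← (adjR.homEquiv a X).symm_apply_apply u]
    rw [Adjunction.homEquiv_counit]
  have surjL : ∀ {a : A} (u : X ⟶ T.obj a), u = η ≫ T.map ((adjL.homEquiv X a).symm u) := by
    intro a u
    conv_lhs => rw [← (adjL.homEquiv X a).apply_symm_apply u]
    rw [Adjunction.homEquiv_unit]
  -- Step 1 : ε is a monomorphism
  haveI hmε : Mono ε := by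
    obtain ⟨r, hr⟩ := aux_split_mono hB (kernel.ι ε)
    have h1 : T.preimage (r ≫ kernel.ι ε) = 0 := by
      apply injR
      rw [Functor.map_preimage, Category.assoc, kernel.condition, comp_zero]
    have h2 : r ≫ kernel.ι ε = 0 := by
      rw [← Functor.map_preimage T (r ≫ kernel.ι ε), h1, Functor.map_zero]
    have hk : kernel.ι ε = 0 := by
      calc kernel.ι ε = (kernel.ι ε ≫ r) ≫ kernel.ι ε := by rw [hr, Category.id_comp]
      _ = kernel.ι ε ≫ (r ≫ kernel.ι ε) := by rw [Category.assoc]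
      _ = 0 := by rw [h2, comp_zero]
    exact Preadditive.mono_of_cancel_zero ε (fun g hg => by
      rw [← kernel.lift_ι ε g hg, hk, comp_zero])
  -- Step 2 : η is an epimorphism
  haveI heη : Epi η := by
    obtain ⟨s, hs⟩ := aux_split_epi hB (cokernel.π η)
    have h1 : T.preimage (cokernel.π η ≫ s) = 0 := by
      apply injL
      rw [Functor.map_preimage, ← Category.assoc, cokernel.condition, zero_comp]
    have h2 : cokernel.π η ≫ s = 0 := by
      rw [← Functor.map_preimage T (cokernel.π η ≫ s), h1, Functor.map_zero]
    have hc : cokernel.π η = 0 := by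
      calc cokernel.π η = cokernel.π η ≫ (s ≫ cokernel.π η) := by rw [hs, Category.comp_id]
      _ = (cokernel.π η ≫ s) ≫ cokernel.π η := by rw [Category.assoc]
      _ = 0 := by rw [h2, zero_comp]
    exact Preadditive.epi_of_cancel_zero η (fun g hg => by
      rw [← cokernel.π_desc η g hg, hc, zero_comp])
  obtain ⟨p, hp⟩ := aux_split_mono hB ε
  obtain ⟨s, hs⟩ := aux_split_epi hB η
  -- there are no nonzero maps from the kernel of η to objects in the image of T
  have keyK : ∀ (a : A) (v : kernel η ⟶ T.obj a), v = 0 := by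
    intro a v
    have hq0 : (𝟙 X - η ≫ s) ≫ η = 0 := by
      rw [Preadditive.sub_comp, Category.id_comp, Category.assoc, hs, Category.comp_id, sub_self]
    have hql : kernel.lift η (𝟙 X - η ≫ s) hq0 ≫ kernel.ι η = 𝟙 X - η ≫ s :=
      kernel.lift_ι η _ hq0
    have hiq : kernel.ι η ≫ kernel.lift η (𝟙 X - η ≫ s) hq0 = 𝟙 (kernel η) := by
      have h3 : kernel.ι η ≫ (𝟙 X - η ≫ s) = kernel.ι η := by
        rw [Preadditive.comp_sub, Category.comp_id, ← Category.assoc, kernel.condition,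
          zero_comp, sub_zero]
      rw [← cancel_mono (kernel.ι η), Category.assoc, hql, h3, Category.id_comp]
    have hw := surjL (kernel.lift η (𝟙 X - η ≫ s) hq0 ≫ v)
    calc v = (kernel.ι η ≫ kernel.lift η (𝟙 X - η ≫ s) hq0) ≫ v := by
          rw [hiq, Category.id_comp]
    _ = kernel.ι η ≫ (kernel.lift η (𝟙 X - η ≫ s) hq0 ≫ v) := by rw [Category.assoc]
    _ = kernel.ι η ≫ (η ≫ T.map ((adjL.homEquiv X a).symm _)) := by rw [← hw]
    _ = (kernel.ι η ≫ η) ≫ T.map _ := by rw [Category.assoc]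
    _ = 0 := by rw [kernel.condition, zero_comp]
  -- there are no nonzero maps from objects in the image of T to the cokernel of ε
  have keyC : ∀ (a : A) (u : T.obj a ⟶ cokernel ε), u = 0 := by
    intro a u
    have hj0 : ε ≫ (𝟙 X - p ≫ ε) = 0 := by
      rw [Preadditive.comp_sub, Category.comp_id, ← Category.assoc, hp, Category.id_comp, sub_self]
    have hjd : cokernel.π ε ≫ cokernel.desc ε (𝟙 X - p ≫ ε) hj0 = 𝟙 X - p ≫ ε :=
      cokernel.π_desc ε _ hj0
    have hjp : cokernel.desc ε (𝟙 X - p ≫ ε) hj0 ≫ cokernel.π ε = 𝟙 (cokernel ε) := by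
      have h3 : (𝟙 X - p ≫ ε) ≫ cokernel.π ε = cokernel.π ε := by
        rw [Preadditive.sub_comp, Category.id_comp, Category.assoc, cokernel.condition,
          comp_zero, sub_zero]
      rw [← cancel_epi (cokernel.π ε), ← Category.assoc, hjd, h3, Category.comp_id]
    have hw := surjR (u ≫ cokernel.desc ε (𝟙 X - p ≫ ε) hj0)
    calc u = u ≫ (cokernel.desc ε (𝟙 X - p ≫ ε) hj0 ≫ cokernel.π ε) := by
          rw [hjp, Category.comp_id]
    _ = (u ≫ cokernel.desc ε (𝟙 X - p ≫ ε) hj0) ≫ cokernel.π ε := by rw [Category.assoc]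
    _ = (T.map ((adjR.homEquiv a X) _) ≫ ε) ≫ cokernel.π ε := by rw [← hw]
    _ = T.map _ ≫ (ε ≫ cokernel.π ε) := by rw [Category.assoc]
    _ = 0 := by rw [cokernel.condition, comp_zero]
  -- ε ≫ η is both mono and epi, hence an isomorphism
  haveI hm : Mono (ε ≫ η) := Preadditive.mono_of_cancel_zero _ (fun g hg => by
    have hg' : (g ≫ ε) ≫ η = 0 := by rw [Category.assoc]; exact hg
    have hl := kernel.lift_ι η (g ≫ ε) hg'
    have h0 : kernel.ι η ≫ p = 0 := keyK (R.obj X) (kernel.ι η ≫ p)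
    calc g = g ≫ (ε ≫ p) := by rw [hp, Category.comp_id]
    _ = (g ≫ ε) ≫ p := by rw [Category.assoc]
    _ = (kernel.lift η (g ≫ ε) hg' ≫ kernel.ι η) ≫ p := by rw [hl]
    _ = kernel.lift η (g ≫ ε) hg' ≫ (kernel.ι η ≫ p) := by rw [Category.assoc]
    _ = 0 := by rw [h0, comp_zero])
  haveI he : Epi (ε ≫ η) := Preadditive.epi_of_cancel_zero _ (fun g hg => by
    have hg' : ε ≫ (η ≫ g) = 0 := by rw [← Category.assoc]; exact hg
    have hd := cokernel.π_desc ε (η ≫ g) hg'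
    have h0 : s ≫ cokernel.π ε = 0 := keyC (L.obj X) (s ≫ cokernel.π ε)
    calc g = (s ≫ η) ≫ g := by rw [hs, Category.id_comp]
    _ = s ≫ (η ≫ g) := by rw [Category.assoc]
    _ = s ≫ (cokernel.π ε ≫ cokernel.desc ε (η ≫ g) hg') := by rw [hd]
    _ = (s ≫ cokernel.π ε) ≫ cokernel.desc ε (η ≫ g) hg' := by rw [Category.assoc]
    _ = 0 := by rw [h0, zero_comp])
  obtain ⟨t, ht⟩ := aux_split_epi hB (ε ≫ η)
  have ht2 : (ε ≫ η) ≫ t = 𝟙 _ := by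
    rw [← cancel_mono (ε ≫ η), Category.assoc, ht, Category.comp_id, Category.id_comp]
  haveI : IsIso (ε ≫ η) := ⟨⟨t, ht2, ht⟩⟩
  haveI : IsIso (T.map (T.preimage (ε ≫ η))) := by
    rw [Functor.map_preimage]
    infer_instance
  exact isIso_of_fully_faithful T _
end

section
/- Let T : M → N be an additive functor between additive categories with M pseudo-abelian (idempotent complete). Then the full subcategory N_T of objects at which the left adjoint of T is defined is stable under direct summands: if N ∈ N_T and P is a direct summand of N in N, then P ∈ N_T. -/
open CategoryTheory CategoryTheory.Limits Opposite

/-!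
The functor `A ↦ (P ⟶ T A)` is a retract of `A ↦ (X ⟶ T A)`, and corepresentable functors form
the essential image of the fully faithful coyoneda embedding of `Mᵒᵖ`. A retract of an object in
the essential image of a fully faithful functor is cut out by an idempotent, which lifts to the
source category; there it splits by idempotent completeness, and the splitting maps to the retract.
-/

/-- The left adjoint of `T` is defined at `X`: the functor `A ↦ (X ⟶ T A)` is
corepresentable. -/
def LeftAdjointDefinedAt {M : Type*} [Category M] {N : Type*} [Category N]
    (T : M ⥤ N) (X : N) : Prop :=
  ∃ P : M, Nonempty ((T ⋙ coyoneda.obj (op X)) ≅ coyoneda.obj (op P))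

namespace CategoryTheory

variable {C D : Type*} [Category C] [Category D]

instance Functor.essImage_isStableUnderRetracts (F : C ⥤ D) [F.Full] [F.Faithful]
    [IsIdempotentComplete C] : F.essImage.IsStableUnderRetracts where
  of_retract {Y Z} h hZ := by
    obtain ⟨X, ⟨φ⟩⟩ := hZ
    let e : X ⟶ X := F.preimage (φ.hom ≫ h.r ≫ h.i ≫ φ.inv)
    have he : e ≫ e = e := F.map_injective (by simp [e])
    obtain ⟨S, ι, π, hιπ, hπι⟩ := IsIdempotentComplete.idempotents_split X e he
    have hπι' : F.map π ≫ F.map ι = φ.hom ≫ h.r ≫ h.i ≫ φ.inv := by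
      rw [← F.map_comp, hπι, F.map_preimage]
    refine ⟨S, ⟨⟨F.map ι ≫ φ.hom ≫ h.r, h.i ≫ φ.inv ≫ F.map π, ?_, ?_⟩⟩⟩
    · simp only [Category.assoc]
      calc F.map ι ≫ φ.hom ≫ h.r ≫ h.i ≫ φ.inv ≫ F.map π
        = F.map ι ≫ (F.map π ≫ F.map ι) ≫ F.map π := by rw [hπι']; simp
        _ = 𝟙 _ := by simp only [← F.map_comp, Category.assoc, hιπ, reassoc_of% hιπ, F.map_id]
    · simp only [Category.assoc]
      calc h.i ≫ φ.inv ≫ F.map π ≫ F.map ι ≫ φ.hom ≫ h.r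
        = h.i ≫ h.r ≫ h.i ≫ h.r := by rw [reassoc_of% hπι']; simp
        _ = 𝟙 _ := by simp

end CategoryTheory

theorem leftAdjointDefinedAt_iff_essImage {M : Type*} [Category M] {N : Type*} [Category N]
    (T : M ⥤ N) (X : N) :
    LeftAdjointDefinedAt T X ↔ coyoneda.essImage (T ⋙ coyoneda.obj (op X)) :=
  ⟨fun ⟨P, ⟨φ⟩⟩ => ⟨op P, ⟨φ.symm⟩⟩, fun ⟨P, ⟨φ⟩⟩ => ⟨P.unop, ⟨φ.symm⟩⟩⟩

theorem stmt5_general {M : Type*} [Category M] {N : Type*} [Category N]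
    [IsIdempotentComplete M]
    (T : M ⥤ N)
    (X P : N) (i : P ⟶ X) (r : X ⟶ P) (hir : i ≫ r = 𝟙 P)
    (hX : LeftAdjointDefinedAt T X) :
    LeftAdjointDefinedAt T P := by
  let h : Retract (T ⋙ coyoneda.obj (op P)) (T ⋙ coyoneda.obj (op X)) :=
    (Retract.mk i r hir).op.map (coyoneda ⋙ (Functor.whiskeringLeft _ _ _).obj T)
  rw [leftAdjointDefinedAt_iff_essImage] at hX ⊢
  exact coyoneda.essImage.prop_of_retract h hX

/-- Let `T : M ⥤ N` be an additive functor between additive categories with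
`M` pseudo-abelian (idempotent complete).  Then the full subcategory `N_T` of objects at which
the left adjoint of `T` is defined is stable under direct summands: if the left adjoint is
defined at `X` and `P` is a direct summand of `X` in `N`, then it is defined at `P`. -/
theorem stmt5 {M : Type*} [Category M] {N : Type*} [Category N]
    [Preadditive M] [Preadditive N] [IsIdempotentComplete M]
    (T : M ⥤ N) [T.Additive]
    (X P : N) (i : P ⟶ X) (r : X ⟶ P) (hir : i ≫ r = 𝟙 P)
    (hX : LeftAdjointDefinedAt T X) :
    LeftAdjointDefinedAt T P :=
  stmt5_general T X P i r hir hX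
end

section
/- Let T : M → N be a triangulated functor between triangulated categories. The full subcategory N_T of N consisting of objects where the left adjoint (resp. right adjoint) S of T is defined is a triangulated subcategory of N: it is stable under shifts, and if f : M → N is a morphism of N_T then any cone of f lies in N_T, with S of the cone represented by a cone of S(f). -/
/-!
The left adjoint `S` is defined at `X` with value `P` exactly when there is a universal arrow
`u : X ⟶ T P`, i.e. `β ↦ u ≫ T β` is a bijection `(P ⟶ A) ≃ (X ⟶ T A)` for every `A`.
Shifting a universal arrow and composing with the commutation isomorphism `(T P)⟦n⟧ ≅ T (P⟦n⟧)`
gives a universal arrow at `X⟦n⟧`. For a distinguished triangle `X ⟶ Y ⟶ Z ⟶ X⟦1⟧` with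
universal arrows at `X` and `Y` compatible with `Sf`, complete `Sf` to a distinguished triangle
`P ⟶ Q ⟶ R ⟶ P⟦1⟧`; the universal arrows extend to a morphism into its image under `T`, and
the five lemma for the long exact sequences of `Hom(-, A)` and `Hom(-, T A)` shows that the
third component is universal too.
-/

open CategoryTheory CategoryTheory.Limits CategoryTheory.Pretriangulated Opposite

universe v u₁ u₂

/-- `P` corepresents `A ↦ (X ⟶ T A)`: the left adjoint `S` of `T` is defined at `X`, with
value `P`. -/
def LeftAdjointAt {M : Type u₁} [Category.{v} M] {N : Type u₂} [Category.{v} N]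
    (T : M ⥤ N) (X : N) (P : M) : Prop :=
  Nonempty ((T ⋙ coyoneda.obj (op X)) ≅ coyoneda.obj (op P))

section UniversalArrow

variable {M : Type u₁} [Category.{v} M] {N : Type u₂} [Category.{v} N] (T : M ⥤ N)

def IsUniversalArrow {X : N} {P : M} (u : X ⟶ T.obj P) : Prop :=
  ∀ A : M, Function.Bijective fun β : P ⟶ A => u ≫ T.map β

variable {T}

lemma inv_app_eq_inv_app_id_comp {X : N} {P : M}
    (e : (T ⋙ coyoneda.obj (op X)) ≅ coyoneda.obj (op P)) {A : M} (β : P ⟶ A) :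
    e.inv.app A β = e.inv.app P (𝟙 P) ≫ T.map β :=
  (Functor.corepresentableByEquiv.symm e.symm).homEquiv_eq β

lemma isUniversalArrow_inv_app_id {X : N} {P : M}
    (e : (T ⋙ coyoneda.obj (op X)) ≅ coyoneda.obj (op P)) :
    IsUniversalArrow T (e.inv.app P (𝟙 P)) := fun A => by
  rw [show (fun β : P ⟶ A => e.inv.app P (𝟙 P) ≫ T.map β) = e.inv.app A from
    funext fun β => (inv_app_eq_inv_app_id_comp e β).symm]
  exact (e.app A).symm.toEquiv.bijective

lemma IsUniversalArrow.leftAdjointAt {X : N} {P : M} {u : X ⟶ T.obj P}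
    (hu : IsUniversalArrow T u) : LeftAdjointAt T X P :=
  ⟨(Functor.corepresentableByEquiv
    { homEquiv := Equiv.ofBijective _ (hu _)
      homEquiv_comp := fun _ _ => by simp }).symm⟩

lemma comp_inv_app_id_eq_of_whiskerLeft_eq {X Y : N} {P Q : M} {f : X ⟶ Y} {g : P ⟶ Q}
    (eX : (T ⋙ coyoneda.obj (op X)) ≅ coyoneda.obj (op P))
    (eY : (T ⋙ coyoneda.obj (op Y)) ≅ coyoneda.obj (op Q))
    (h : eY.inv ≫ Functor.whiskerLeft T (coyoneda.map f.op) ≫ eX.hom = coyoneda.map g.op) :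
    f ≫ eY.inv.app Q (𝟙 Q) = eX.inv.app P (𝟙 P) ≫ T.map g := by
  have := congr_arg (eX.inv.app Q) (types_congr_hom (NatTrans.congr_app h Q) (𝟙 Q))
  simpa [inv_app_eq_inv_app_id_comp eX g] using this

end UniversalArrow

section Shift

variable {M : Type u₁} [Category.{v} M] {N : Type u₂} [Category.{v} N]
  [HasShift M ℤ] [HasShift N ℤ] (T : M ⥤ N) [T.CommShift ℤ]

def shiftArrow (n : ℤ) {X : N} {P : M} (u : X ⟶ T.obj P) : X⟦n⟧ ⟶ T.obj (P⟦n⟧) :=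
  u⟦n⟧' ≫ (T.commShiftIso n).inv.app P

variable {T}

lemma shiftArrow_comp_map (n : ℤ) {X Y : N} {P Q : M} {f : X ⟶ Y} {g : P ⟶ Q}
    {u : X ⟶ T.obj P} {v : Y ⟶ T.obj Q} (h : f ≫ v = u ≫ T.map g) :
    f⟦n⟧' ≫ shiftArrow T n v = shiftArrow T n u ≫ T.map (g⟦n⟧') := by
  have := (T.commShiftIso n).inv.naturality g
  dsimp at this
  rw [shiftArrow, shiftArrow, ← Functor.map_comp_assoc, h, Functor.map_comp, Category.assoc, this,
    Category.assoc]

lemma comp_shiftArrow_eq_of_comp_shift_eq (n : ℤ) {X Y : N} {P Q : M} {f : Y ⟶ X⟦n⟧}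
    {u : X ⟶ T.obj P} {w : Y ⟶ T.obj Q} {g : Q ⟶ P⟦n⟧}
    (h : f ≫ u⟦n⟧' = w ≫ T.map g ≫ (T.commShiftIso n).hom.app P) :
    f ≫ shiftArrow T n u = w ≫ T.map g := by
  rw [shiftArrow, ← Category.assoc, h]
  simp

lemma IsUniversalArrow.shift {X : N} {P : M} {u : X ⟶ T.obj P}
    (hu : IsUniversalArrow T u) (n : ℤ) : IsUniversalArrow T (shiftArrow T n u) := by
  intro A
  let ε : A⟦-n⟧⟦n⟧ ≅ A := (shiftEquiv M n).counitIso.app A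
  let ψ : (P ⟶ A⟦-n⟧) ≃ (P⟦n⟧ ⟶ A) :=
    (Functor.FullyFaithful.ofFullyFaithful _).homEquiv.trans ((Iso.refl _).homCongr ε)
  let e : (T.obj (A⟦-n⟧))⟦n⟧ ≅ T.obj A := (T.commShiftIso n).symm.app _ ≪≫ T.mapIso ε
  have hcomp : (fun γ : P⟦n⟧ ⟶ A => shiftArrow T n u ≫ T.map γ) ∘ ψ =
      (Iso.refl _).homCongr e ∘ (shiftFunctor N n).map ∘ (fun β : P ⟶ A⟦-n⟧ => u ≫ T.map β) := by
    funext β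
    simp [ψ, e, shiftArrow]
  refine (Function.Bijective.of_comp_iff _ ψ.bijective).1 ?_
  rw [hcomp]
  exact (Equiv.bijective _).comp
    (((Functor.FullyFaithful.ofFullyFaithful _).map_bijective _ _).comp (hu _))

end Shift

section Cone

variable {M : Type u₁} [Category.{v} M] {N : Type u₂} [Category.{v} N]
  [Preadditive M] [Preadditive N] {T : M ⥤ N} [T.Additive]

lemma IsUniversalArrow.eq_zero_of_comp_map_eq_zero {X : N} {P A : M} {u : X ⟶ T.obj P}
    (hu : IsUniversalArrow T u) {β : P ⟶ A} (h : u ≫ T.map β = 0) : β = 0 :=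
  (hu A).1 (by simpa using h)

variable [HasZeroObject M] [HasZeroObject N] [HasShift M ℤ] [HasShift N ℤ]
  [∀ n : ℤ, (shiftFunctor M n).Additive] [∀ n : ℤ, (shiftFunctor N n).Additive]
  [Pretriangulated M] [Pretriangulated N] [T.CommShift ℤ]
  {K : Triangle N} {L : Triangle M} (hK : K ∈ distTriang N) (hL : L ∈ distTriang M) {u₁ : K.obj₁ ⟶ T.obj L.obj₁} {u₂ : K.obj₂ ⟶ T.obj L.obj₂}
  {u₃ : K.obj₃ ⟶ T.obj L.obj₃} (comm₁ : K.mor₁ ≫ u₂ = u₁ ≫ T.map L.mor₁)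
  (comm₂ : K.mor₂ ≫ u₃ = u₂ ≫ T.map L.mor₂)
  (comm₃ : K.mor₃ ≫ shiftArrow T 1 u₁ = u₃ ≫ T.map L.mor₃)
  (h₁ : IsUniversalArrow T u₁) (h₂ : IsUniversalArrow T u₂)

include hK hL comm₁ comm₂ comm₃ h₁ h₂ in
lemma eq_zero_of_comp_map_eq_zero_of_triangle {A : M} {α : L.obj₃ ⟶ A}
    (hα : u₃ ≫ T.map α = 0) : α = 0 := by
  have hg : L.mor₂ ≫ α = 0 := h₂.eq_zero_of_comp_map_eq_zero (by
    rw [T.map_comp, ← reassoc_of% comm₂, hα, comp_zero])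
  obtain ⟨γ, rfl⟩ := L.yoneda_exact₃ hL α hg
  have hγ : K.mor₃ ≫ shiftArrow T 1 u₁ ≫ T.map γ = 0 := by
    rw [reassoc_of% comm₃, ← T.map_comp, hα]
  obtain ⟨ε, hε⟩ := Triangle.yoneda_exact₃ _ (rot_of_distTriang _ hK) _ hγ
  obtain ⟨δ, rfl⟩ := (h₂.shift 1 A).2 ε
  have hγδ : γ = -(L.mor₁⟦1⟧' ≫ δ) := (h₁.shift 1 A).1 (by
    dsimp only at hε ⊢
    rw [hε, T.map_neg, T.map_comp, Preadditive.comp_neg,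
      ← reassoc_of% (shiftArrow_comp_map 1 comm₁)]
    exact Preadditive.neg_comp _ _)
  rw [hγδ, Preadditive.comp_neg, ← Category.assoc, comp_distTriang_mor_zero₃₁ _ hL, zero_comp,
    neg_zero]

include hK hL comm₁ comm₂ comm₃ h₁ h₂ in
lemma exists_comp_map_eq_of_triangle {A : M} (ζ : K.obj₃ ⟶ T.obj A) :
    ∃ α : L.obj₃ ⟶ A, u₃ ≫ T.map α = ζ := by
  obtain ⟨β, hβ⟩ := (h₂ A).2 (K.mor₂ ≫ ζ)
  dsimp only at hβ
  have hβ₀ : L.mor₁ ≫ β = 0 := h₁.eq_zero_of_comp_map_eq_zero (by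
    rw [T.map_comp, ← reassoc_of% comm₁, hβ, comp_distTriang_mor_zero₁₂_assoc _ hK, zero_comp])
  obtain ⟨α₀, rfl⟩ := L.yoneda_exact₂ hL β hβ₀
  have hζ : K.mor₂ ≫ (ζ - u₃ ≫ T.map α₀) = 0 := by
    rw [Preadditive.comp_sub, ← hβ, T.map_comp, ← reassoc_of% comm₂, sub_self]
  obtain ⟨ε, hε⟩ := K.yoneda_exact₃ hK _ hζ
  obtain ⟨γ, rfl⟩ := (h₁.shift 1 A).2 ε
  refine ⟨α₀ + L.mor₃ ≫ γ, ?_⟩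
  dsimp only at hε
  rw [T.map_add, Preadditive.comp_add, T.map_comp, ← reassoc_of% comm₃, ← hε, add_sub_cancel]

include hK hL comm₁ comm₂ comm₃ h₁ h₂ in
lemma isUniversalArrow_of_triangle : IsUniversalArrow T u₃ := fun A =>
  ⟨fun α α' h => sub_eq_zero.1 <|
      eq_zero_of_comp_map_eq_zero_of_triangle hK hL comm₁ comm₂ comm₃ h₁ h₂ <| by
        rw [T.map_sub, Preadditive.comp_sub]
        exact sub_eq_zero.2 h,
    exists_comp_map_eq_of_triangle hK hL comm₁ comm₂ comm₃ h₁ h₂⟩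

end Cone

/-- Let `T : M ⥤ N` be a triangulated functor between triangulated
categories.  The full subcategory `N_T` of objects where the left adjoint `S` of `T` is
defined is triangulated: it is stable under shifts (with `S (X⟦n⟧) = (S X)⟦n⟧`), and for any
distinguished triangle `(X, Y, Z, f, g, h)` of `N` with `X, Y ∈ N_T` (corepresented by
`P, Q`, the morphism `f` corresponding to `Sf : P ⟶ Q`), the cone `Z` lies in `N_T` and
`S Z` is represented by a cone of `Sf`. -/
theorem stmt7 {M : Type u₁} [Category.{v} M] {N : Type u₂} [Category.{v} N]
    [Preadditive M] [Preadditive N] [HasZeroObject M] [HasZeroObject N]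
    [HasShift M ℤ] [HasShift N ℤ]
    [∀ n : ℤ, (shiftFunctor M n).Additive] [∀ n : ℤ, (shiftFunctor N n).Additive]
    [Pretriangulated M] [Pretriangulated N]
    (T : M ⥤ N) [T.Additive] [T.CommShift ℤ] [T.IsTriangulated] :
    (∀ (n : ℤ) (X : N) (P : M), LeftAdjointAt T X P → LeftAdjointAt T (X⟦n⟧) (P⟦n⟧)) ∧
    (∀ (Tr : Triangle N), (Tr ∈ distTriang N) →
      ∀ (P Q : M)
        (eX : (T ⋙ coyoneda.obj (op Tr.obj₁)) ≅ coyoneda.obj (op P))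
        (eY : (T ⋙ coyoneda.obj (op Tr.obj₂)) ≅ coyoneda.obj (op Q))
        (Sf : P ⟶ Q),
        eY.inv ≫ Functor.whiskerLeft T (coyoneda.map Tr.mor₁.op) ≫ eX.hom = coyoneda.map Sf.op →
        ∃ (R : M) (g' : Q ⟶ R) (h' : R ⟶ P⟦(1 : ℤ)⟧),
          (Triangle.mk Sf g' h' ∈ distTriang M) ∧ LeftAdjointAt T Tr.obj₃ R) := by
  refine ⟨fun n X P ⟨e⟩ => ((isUniversalArrow_inv_app_id e).shift n).leftAdjointAt, ?_⟩
  intro Tr hTr P Q eX eY Sf hSf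
  obtain ⟨R, g', h', hL⟩ := distinguished_cocone_triangle Sf
  have comm₁ := comp_inv_app_id_eq_of_whiskerLeft_eq eX eY hSf
  obtain ⟨w, comm₂, comm₃⟩ := complete_distinguished_triangle_morphism Tr
    (T.mapTriangle.obj (Triangle.mk Sf g' h')) hTr (T.map_distinguished _ hL) _ _ comm₁
  exact ⟨R, g', h', hL, (isUniversalArrow_of_triangle hTr hL comm₁ comm₂
    (comp_shiftArrow_eq_of_comp_shift_eq 1 comm₃) (isUniversalArrow_inv_app_id eX)
    (isUniversalArrow_inv_app_id eY)).leftAdjointAt⟩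
end

section
/- Let M, N be two pseudofunctors from a category of fields to Cat, φ : M → N a morphism of pseudofunctors, and f : k → K a field extension such that the extension-of-scalars functors f*_M and f*_N admit left adjoints f^M_♯ and f^N_♯. If φ_K is full and φ_k is essentially surjective, then for every object M of M(K), the base-change morphism w : f^N_♯ φ_K(M) → φ_k f^M_♯(M) is a split monomorphism. -/
open CategoryTheory

universe v₁ v₂ v₃ v₄ u₁ u₂ u₃ u₄

/-- Let `M`, `N` be two (motivic) theories (pseudofunctors on fields), and
`φ : M → N` a morphism of theories.  For a field extension `f : k → K`, write
`fM : M(k) ⥤ M(K)` and `fN : N(k) ⥤ N(K)` for extension of scalars, `φk : M(k) ⥤ N(k)`,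
`φK : M(K) ⥤ N(K)` for the components of `φ`, and `v : fM ⋙ φK ≅ φk ⋙ fN` for the
structural isomorphism.  Assume `fM` and `fN` admit left adjoints `fMs = f^M_♯` and
`fNs = f^N_♯`.  If `φK` is full and `φk` is essentially surjective, then for every object
`X` of `M(K)` the base-change morphism
`w : fNs (φK X) ⟶ φk (fMs X)` is a split monomorphism. -/
theorem stmt12 {Mk : Type u₁} [Category.{v₁} Mk] {MK : Type u₂} [Category.{v₂} MK]
    {Nk : Type u₃} [Category.{v₃} Nk] {NK : Type u₄} [Category.{v₄} NK]
    (fM : Mk ⥤ MK) (fN : Nk ⥤ NK) (φk : Mk ⥤ Nk) (φK : MK ⥤ NK)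
    (v : fM ⋙ φK ≅ φk ⋙ fN)
    (fMs : MK ⥤ Mk) (adjM : fMs ⊣ fM) (fNs : NK ⥤ Nk) (adjN : fNs ⊣ fN)
    [φK.Full] [φk.EssSurj] (X : MK) :
    IsSplitMono
      (fNs.map (φK.map (adjM.unit.app X)) ≫
        fNs.map (v.hom.app (fMs.obj X)) ≫
        adjN.counit.app (φk.obj (fMs.obj X))) := by
  -- choose a preimage of `fNs (φK X)` under the essentially surjective `φk`
  set Y : Mk := φk.objPreimage (fNs.obj (φK.obj X)) with hY
  set e : φk.obj Y ≅ fNs.obj (φK.obj X) := φk.objObjPreimageIso _ with he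
  -- use fullness of `φK`
  set g : X ⟶ fM.obj Y :=
    φK.preimage (adjN.unit.app (φK.obj X) ≫ fN.map e.inv ≫ v.inv.app Y) with hg
  -- transpose under `adjM`
  set g' : fMs.obj X ⟶ Y := (adjM.homEquiv X Y).symm g with hg'
  have hgu : adjM.unit.app X ≫ fM.map g' = g := by
    have h := (adjM.homEquiv X Y).apply_symm_apply g
    rw [Adjunction.homEquiv_unit] at h
    exact hg' ▸ h
  have key : φK.map (adjM.unit.app X) ≫ v.hom.app (fMs.obj X) ≫
      fN.map (φk.map g' ≫ e.hom) = adjN.unit.app (φK.obj X) := by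
    have hv : v.hom.app (fMs.obj X) ≫ fN.map (φk.map g') =
        φK.map (fM.map g') ≫ v.hom.app Y := (v.hom.naturality g').symm
    rw [fN.map_comp, ← Category.assoc (v.hom.app (fMs.obj X)), hv]
    rw [Category.assoc, ← Category.assoc (φK.map (adjM.unit.app X)), ← φK.map_comp, hgu,
      hg, φK.map_preimage]
    simp
  constructor
  refine ⟨φk.map g' ≫ e.hom, ?_⟩
  have hc : adjN.counit.app (φk.obj (fMs.obj X)) ≫ (φk.map g' ≫ e.hom) =
      fNs.map (fN.map (φk.map g' ≫ e.hom)) ≫ adjN.counit.app (fNs.obj (φK.obj X)) :=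
    (adjN.counit.naturality _).symm
  simp only [Category.assoc]
  rw [hc, ← Category.assoc (fNs.map (v.hom.app (fMs.obj X))), ← fNs.map_comp,
    ← Category.assoc (fNs.map (φK.map (adjM.unit.app X))), ← fNs.map_comp,
    key]
  exact adjN.left_triangle_components (φK.obj X)
end

section
/- Let A be a semiprimary algebra over a field F, i.e. its radical R is nilpotent and A/R is semisimple. Let (e_i) be a finite family of orthogonal idempotents of A summing to 1 whose images in A/R are central, and let ε be an idempotent of A. Then there exist a decomposition ε = Σ_i ε_i into orthogonal idempotents and an element r ∈ R such that for each i, (1+r)e_i(1+r)^{-1} − ε_i is an idempotent (i.e. ε_i divides the conjugated idempotent (1+r)e_i(1+r)^{-1}). -/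
/-- Let `A` be a semiprimary algebra over a field `F`: its radical `R` is a
nilpotent two-sided ideal and `A/R` is semisimple.  Let `(e i)` be a finite family of
orthogonal idempotents of `A` summing to `1` whose images in `A/R` are central, and let `ε`
be an idempotent of `A`.  Then there exist a decomposition `ε = Σ ε_i` into orthogonal
idempotents and `r ∈ R` such that `1 + r` is invertible and for each `i`,
`(1+r) * e i * (1+r)⁻¹ − ε_i` is again an idempotent, i.e. `ε_i` divides the conjugated
idempotent `(1+r) * e i * (1+r)⁻¹`. -/
theorem stmt13 {F : Type*} [Field F] {A : Type*} [Ring A] [Algebra F A]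
    (R : TwoSidedIdeal A)
    (hnil : ∃ n : ℕ, ∀ x : Fin n → A, (∀ i, x i ∈ R) → (List.ofFn x).prod = 0)
    (hss : IsSemisimpleRing R.ringCon.Quotient)
    {ι : Type*} [Fintype ι] (e : ι → A)
    (he : ∀ i, IsIdempotentElem (e i))
    (horth : ∀ i j, i ≠ j → e i * e j = 0)
    (hsum : ∑ i, e i = 1)
    (hcentral : ∀ (i : ι) (a : A), e i * a - a * e i ∈ R)
    (ε : A) (hε : IsIdempotentElem ε) :
    ∃ (εi : ι → A) (r : A) (s : A), r ∈ R ∧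
      (∀ i, IsIdempotentElem (εi i)) ∧
      (∀ i j, i ≠ j → εi i * εi j = 0) ∧
      (∑ i, εi i) = ε ∧
      (1 + r) * s = 1 ∧ s * (1 + r) = 1 ∧
      ∀ i, IsIdempotentElem ((1 + r) * e i * s - εi i) := by
  classical
  obtain ⟨n, hn⟩ := hnil
  set π : A →+* R.ringCon.Quotient := R.ringCon.mk' with hπdef
  have hπsurj : Function.Surjective π := fun q => Quot.exists_rep q
  have hmem : ∀ x : A, π x = 0 ↔ x ∈ R := by
    intro x
    have h0 : (0 : R.ringCon.Quotient) = π 0 := (map_zero π).symm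
    rw [h0]
    constructor
    · intro h
      have := R.ringCon.eq.mp h
      simpa using (R.rel_iff x 0).mp this
    · intro h
      exact R.ringCon.eq.mpr ((R.rel_iff x 0).mpr (by simpa using h))
  have hRnil : ∀ x ∈ R, IsNilpotent x := by
    intro x hx
    refine ⟨n, ?_⟩
    have := hn (fun _ => x) (fun _ => hx)
    rwa [List.ofFn_const, List.prod_replicate] at this
  have hkernil : ∀ x ∈ RingHom.ker π, IsNilpotent x := by
    intro x hx
    exact hRnil x ((hmem x).mp hx)
  -- images
  set Eb : ι → R.ringCon.Quotient := fun i => π (e i) with hEbdef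
  set Em : R.ringCon.Quotient := π ε with hEmdef
  have hcent : ∀ (i : ι) (q : R.ringCon.Quotient), Eb i * q = q * Eb i := by
    intro i q
    obtain ⟨a, rfl⟩ := hπsurj q
    have := (hmem _).mpr (hcentral i a)
    rw [map_sub, map_mul, map_mul, sub_eq_zero] at this
    exact this
  have hEbi : ∀ i, Eb i * Eb i = Eb i := fun i => by
    rw [hEbdef]; simp only [← map_mul, (he i).eq]
  have hEborth : ∀ i j, i ≠ j → Eb i * Eb j = 0 := fun i j hij => by
    rw [hEbdef]; simp only [← map_mul, horth i j hij, map_zero]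
  have hEbsum : ∑ i, Eb i = 1 := by
    rw [hEbdef, ← map_sum, hsum, map_one]
  have hEm : Em * Em = Em := by rw [hEmdef, ← map_mul, hε.eq]
  have hEm' : (1 - Em) * (1 - Em) = 1 - Em := by
    have h : (1 - Em) * (1 - Em) = 1 - Em - Em + Em * Em := by noncomm_ring
    rw [h, hEm]; abel
  -- the complete orthogonal system downstairs
  set g : ι × Bool → R.ringCon.Quotient :=
    fun p => Eb p.1 * (if p.2 then Em else 1 - Em) with hgdef
  have hxb : ∀ b : Bool, (if b then Em else 1 - Em) * (if b then Em else 1 - Em)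
      = (if b then Em else 1 - Em) := by
    intro b; cases b
    · show (1 - Em) * (1 - Em) = 1 - Em
      exact hEm'
    · show Em * Em = Em
      exact hEm
  have hxb0 : ∀ b b' : Bool, b ≠ b' →
      (if b then Em else 1 - Em) * (if b' then Em else 1 - Em) = 0 := by
    intro b b' hbb'
    cases b <;> cases b'
    · exact absurd rfl hbb'
    · show (1 - Em) * Em = 0
      rw [sub_mul, one_mul, hEm, sub_self]
    · show Em * (1 - Em) = 0
      rw [mul_sub, mul_one, hEm, sub_self]
    · exact absurd rfl hbb'
  have hgmul : ∀ p q : ι × Bool, g p * g q =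
      (Eb p.1 * Eb q.1) * ((if p.2 then Em else 1 - Em) * (if q.2 then Em else 1 - Em)) := by
    intro p q
    rw [hgdef]
    dsimp only
    rw [mul_assoc, ← mul_assoc (if p.2 then Em else 1 - Em), ← hcent q.1, mul_assoc, mul_assoc]
  have hg : CompleteOrthogonalIdempotents g := by
    refine ⟨⟨fun p => ?_, fun p q hpq => ?_⟩, ?_⟩
    · show g p * g p = g p
      rw [hgmul, hEbi, hxb]
    · show g p * g q = 0
      rw [hgmul]
      by_cases h1 : p.1 = q.1
      · have h2 : p.2 ≠ q.2 := by
          intro h2; exact hpq (Prod.ext h1 h2)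
        rw [hxb0 _ _ h2, mul_zero]
      · rw [hEborth _ _ h1, zero_mul]
    · rw [Fintype.sum_prod_type]
      have : ∀ i : ι, ∑ b : Bool, g (i, b) = Eb i := by
        intro i
        rw [Fintype.sum_bool]
        show Eb i * Em + Eb i * (1 - Em) = Eb i
        rw [← mul_add]
        simp
      simp only [this, hEbsum]
  -- lift
  obtain ⟨f, hf, hfg⟩ := CompleteOrthogonalIdempotents.lift_of_isNilpotent_ker π hkernil hg
    (fun p => RingHom.mem_range.mpr (hπsurj (g p)))
  have hπf : ∀ p, π (f p) = g p := fun p => congr_fun hfg p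
  -- E = sum of the ε-part
  set E : A := ∑ i : ι, f (i, true) with hEdef
  have hE : IsIdempotentElem E := by
    have hemb : OrthogonalIdempotents (fun i : ι => f (i, true)) :=
      hf.1.embedding ⟨fun i : ι => (i, true), fun a b h => congrArg Prod.fst h⟩
    exact hemb.isIdempotentElem_sum
  have hπE : π E = Em := by
    rw [hEdef, map_sum]
    have : ∀ i : ι, π (f (i, true)) = Eb i * Em := fun i => hπf (i, true)
    rw [Finset.sum_congr rfl (fun i _ => this i), ← Finset.sum_mul, hEbsum, one_mul]
  -- conjugating unit u with u E u⁻¹ = ε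
  set u : A := ε * E + (1 - ε) * (1 - E) with hudef
  have hπu : π u = 1 := by
    rw [hudef, map_add, map_mul, map_mul, map_sub, map_sub, map_one, hπE, ← hEmdef, hEm, hEm']
    abel
  have hu : IsUnit u := by
    have h1 : IsNilpotent (u - 1) := hkernil _ (by
      rw [RingHom.mem_ker, map_sub, hπu, map_one, sub_self])
    have := h1.isUnit_one_add
    rwa [show 1 + (u - 1) = u by abel] at this
  obtain ⟨uu, huu⟩ := hu
  set w : A := ((uu⁻¹ : Aˣ) : A) with hwdef
  have hw1 : u * w = 1 := by rw [← huu, hwdef]; exact uu.mul_inv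
  have hw2 : w * u = 1 := by rw [← huu, hwdef]; exact uu.inv_mul
  have hπw : π w = 1 := by
    have := congrArg π hw1
    rw [map_mul, hπu, one_mul, map_one] at this
    exact this
  have huE : u * E = ε * u := by
    have h1 : u * E = ε * E := by
      rw [hudef, add_mul, mul_assoc, mul_assoc, hE.eq,
        show (1 - E) * E = 0 by rw [sub_mul, one_mul, hE.eq, sub_self], mul_zero, add_zero]
    have h2 : ε * u = ε * E := by
      rw [hudef, mul_add, ← mul_assoc ε (1 - ε), ← mul_assoc ε ε, hε.eq,
        show ε * (1 - ε) = 0 by rw [mul_sub, mul_one, hε.eq, sub_self], zero_mul, add_zero]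
    rw [h1, h2]
  -- conjugated family
  set Ff : ι × Bool → A := fun p => u * f p * w with hFdef
  have key : ∀ a b : A, (u * a * w) * (u * b * w) = u * (a * b) * w := by
    intro a b
    calc (u * a * w) * (u * b * w) = u * a * (w * u) * (b * w) := by noncomm_ring
      _ = u * a * 1 * (b * w) := by rw [hw2]
      _ = u * (a * b) * w := by noncomm_ring
  have hFidem : ∀ p, IsIdempotentElem (Ff p) := by
    intro p
    show Ff p * Ff p = Ff p
    rw [hFdef]
    dsimp only
    rw [key, (hf.1.idem p).eq]
  have hForth : ∀ p q, p ≠ q → Ff p * Ff q = 0 := by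
    intro p q hpq
    rw [hFdef]
    dsimp only
    rw [key, hf.1.ortho hpq, mul_zero, zero_mul]
  have hπF : ∀ p, π (Ff p) = g p := by
    intro p
    rw [hFdef]
    dsimp only
    rw [map_mul, map_mul, hπu, hπw, one_mul, mul_one, hπf]
  set εi : ι → A := fun i => Ff (i, true) with hεidef
  have hsumεi : ∑ i, εi i = ε := by
    have h1 : ∑ i, εi i = u * E * w := by
      rw [hEdef, Finset.mul_sum, Finset.sum_mul]
    rw [h1, huE, mul_assoc, hw1, mul_one]
  set hh : ι → A := fun i => Ff (i, true) + Ff (i, false) with hhdef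
  have hπh : ∀ i, π (hh i) = Eb i := by
    intro i
    rw [hhdef]
    dsimp only
    rw [map_add, hπF, hπF]
    show Eb i * Em + Eb i * (1 - Em) = Eb i
    rw [← mul_add]
    simp
  have hhidem : ∀ i, hh i * hh i = hh i := by
    intro i
    rw [hhdef]
    dsimp only
    rw [add_mul, mul_add, mul_add, (hFidem (i, true)).eq, (hFidem (i, false)).eq,
      hForth (i, true) (i, false) (by simp), hForth (i, false) (i, true) (by simp)]
    abel
  have hhorth : ∀ i j, i ≠ j → hh i * hh j = 0 := by
    intro i j hij
    rw [hhdef]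
    dsimp only
    rw [add_mul, mul_add, mul_add,
      hForth (i, true) (j, true) (by simp [hij]),
      hForth (i, true) (j, false) (by simp [hij]),
      hForth (i, false) (j, true) (by simp [hij]),
      hForth (i, false) (j, false) (by simp [hij])]
    abel
  -- the conjugating element v
  set v : A := ∑ i, hh i * e i with hvdef
  have hπv : π v = 1 := by
    rw [hvdef, map_sum]
    have : ∀ i : ι, π (hh i * e i) = Eb i := fun i => by
      rw [map_mul, hπh]
      exact hEbi i
    rw [Finset.sum_congr rfl (fun i _ => this i), hEbsum]
  have hrR : v - 1 ∈ R := (hmem _).mp (by rw [map_sub, hπv, map_one, sub_self])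
  have hvu : IsUnit v := by
    have h1 : IsNilpotent (v - 1) := hRnil _ hrR
    have := h1.isUnit_one_add
    rwa [show 1 + (v - 1) = v by abel] at this
  obtain ⟨vv, hvv⟩ := hvu
  set s : A := ((vv⁻¹ : Aˣ) : A) with hsdef
  have hvs : v * s = 1 := by rw [← hvv, hsdef]; exact vv.mul_inv
  have hsv : s * v = 1 := by rw [← hvv, hsdef]; exact vv.inv_mul
  have hve : ∀ j, v * e j = hh j * e j := by
    intro j
    rw [hvdef, Finset.sum_mul]
    rw [Finset.sum_eq_single j (fun i _ hij => by
        rw [mul_assoc, horth i j hij, mul_zero]) (fun h => absurd (Finset.mem_univ j) h)]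
    rw [mul_assoc, (he j).eq]
  have hhv : ∀ j, hh j * v = hh j * e j := by
    intro j
    rw [hvdef, Finset.mul_sum]
    rw [Finset.sum_eq_single j (fun i _ hij => by
        rw [← mul_assoc, hhorth j i hij.symm, zero_mul]) (fun h => absurd (Finset.mem_univ j) h)]
    rw [← mul_assoc, hhidem j]
  have hconj : ∀ j, v * e j * s = hh j := by
    intro j
    rw [hve j, ← hhv j, mul_assoc, hvs, mul_one]
  refine ⟨εi, v - 1, s, hrR, fun i => hFidem (i, true), ?_, hsumεi, ?_, ?_, ?_⟩
  · intro i j hij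
    exact hForth (i, true) (j, true) (by simp [hij])
  · rw [show 1 + (v - 1) = v by abel]; exact hvs
  · rw [show 1 + (v - 1) = v by abel]; exact hsv
  · intro i
    rw [show 1 + (v - 1) = v by abel, hconj i,
      show hh i - εi i = Ff (i, false) by rw [hhdef, hεidef]; dsimp only; abel]
    exact hFidem (i, false)
end

section
/- Let A be a finite-dimensional (or more generally semiprimary) F-algebra, let C be an F-linear pseudo-abelian category, and let M be an object of C with End(M) = A. Given a direct sum decomposition M = ⊕_i M_i whose associated idempotents are central modulo the radical R of A, and a direct summand N of M, there exists a decomposition N = ⊕_i N_i where each N_i is isomorphic to a direct summand of M_i. -/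
open CategoryTheory CategoryTheory.Limits

namespace Stmt14Aux

variable {C : Type*} [Category C] [Preadditive C] {X Y : C}

/-- The (non-unital) ring embedding `End Y → End X` induced by a retract `Y` of `X`. -/
def cornerHom (i : Y ⟶ X) (p : X ⟶ Y) (h : i ≫ p = 𝟙 Y) : End Y →ₙ+* End X where
  toFun b := p ≫ b ≫ i
  map_zero' := by simp
  map_add' x y := by
    show p ≫ (x + y) ≫ i = p ≫ x ≫ i + p ≫ y ≫ i
    rw [Preadditive.add_comp Y Y X x y i, Preadditive.comp_add]
  map_mul' x y := by
    simp only [End.mul_def, Category.assoc]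
    rw [reassoc_of% h]

lemma cornerHom_apply (i : Y ⟶ X) (p : X ⟶ Y) (h : i ≫ p = 𝟙 Y) (b : End Y) :
    cornerHom i p h b = p ≫ b ≫ i := rfl

lemma cornerHom_section (i : Y ⟶ X) (p : X ⟶ Y) (h : i ≫ p = 𝟙 Y) (b : End Y) :
    i ≫ (cornerHom i p h b) ≫ p = b := by
  simp only [cornerHom_apply, Category.assoc]
  rw [reassoc_of% h, h, Category.comp_id]

lemma cornerHom_inj (i : Y ⟶ X) (p : X ⟶ Y) (h : i ≫ p = 𝟙 Y) :
    Function.Injective (cornerHom i p h) := by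
  intro x y hxy
  rw [← cornerHom_section i p h x, ← cornerHom_section i p h y, hxy]

lemma cornerHom_pow (i : Y ⟶ X) (p : X ⟶ Y) (h : i ≫ p = 𝟙 Y) (x : End Y) (k : ℕ) :
    cornerHom i p h (x ^ (k + 1)) = (cornerHom i p h x) ^ (k + 1) := by
  induction k with
  | zero => simp
  | succ k ih => rw [pow_succ, map_mul, ih, ← pow_succ]

lemma isNilpotent_of_cornerHom (i : Y ⟶ X) (p : X ⟶ Y) (h : i ≫ p = 𝟙 Y) (x : End Y)
    (hx : IsNilpotent (cornerHom i p h x)) : IsNilpotent x := by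
  obtain ⟨m, hm⟩ := hx
  refine ⟨m + 1, cornerHom_inj i p h ?_⟩
  rw [cornerHom_pow, pow_succ, hm, zero_mul, map_zero]

end Stmt14Aux

open Stmt14Aux

/-- Let `C` be an `F`-linear pseudo-abelian category and `M` an object of
`C` whose endomorphism algebra `A = End M` is semiprimary (radical `R` nilpotent, `A/R`
semisimple).  Given a direct sum decomposition `M = ⊕ M_i` by orthogonal idempotents
`e i` summing to `1` which are central modulo `R`, and a direct summand `N` of `M` (split by
an idempotent `ε`), there is a decomposition `N ≅ ⊕ N_i` where each `N_i` is isomorphic to a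
direct summand (a retract) of `M_i`. -/
theorem stmt14 {F : Type*} [Field F] {C : Type*} [Category C] [Preadditive C]
    [Linear F C] [IsIdempotentComplete C] [HasFiniteBiproducts C]
    (M : C)
    (R : TwoSidedIdeal (End M))
    (hnil : ∃ n : ℕ, ∀ x : Fin n → End M, (∀ i, x i ∈ R) → (List.ofFn x).prod = 0)
    (hss : IsSemisimpleRing R.ringCon.Quotient)
    {ι : Type} [Fintype ι] (e : ι → End M)
    (he : ∀ i, IsIdempotentElem (e i))
    (horth : ∀ i j, i ≠ j → e i * e j = 0)
    (hsum : ∑ i, e i = 1)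
    (hcentral : ∀ (i : ι) (a : End M), e i * a - a * e i ∈ R)
    (Mf : ι → C) (r : ∀ i, M ⟶ Mf i) (s : ∀ i, Mf i ⟶ M)
    (hMf : ∀ i, s i ≫ r i = 𝟙 (Mf i)) (hMe : ∀ i, r i ≫ s i = e i)
    (ε : End M) (hε : IsIdempotentElem ε)
    (N : C) (rN : M ⟶ N) (sN : N ⟶ M)
    (hN : sN ≫ rN = 𝟙 N) (hNe : rN ≫ sN = ε) :
    ∃ Nf : ι → C, Nonempty (N ≅ ⨁ Nf) ∧
      ∀ i, ∃ (u : Nf i ⟶ Mf i) (v : Mf i ⟶ Nf i), u ≫ v = 𝟙 (Nf i) := by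
  classical
  obtain ⟨n, hn⟩ := hnil
  let ψ : End N →ₙ+* End M := cornerHom sN rN hN
  let RN : TwoSidedIdeal (End N) := R.comap ψ
  have hmemRN : ∀ x : End N, x ∈ RN ↔ ψ x ∈ R := fun x => TwoSidedIdeal.mem_comap ψ
  have hRNnil : ∀ x ∈ RN, IsNilpotent x := by
    intro x hx
    have hψx : ψ x ∈ R := (hmemRN x).1 hx
    have hpow : (ψ x) ^ n = 0 := by
      have := hn (fun _ => ψ x) (fun _ => hψx)
      rwa [List.ofFn_const, List.prod_replicate] at this
    exact isNilpotent_of_cornerHom sN rN hN x ⟨n, hpow⟩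
  let π : End N →+* RN.ringCon.Quotient := RN.ringCon.mk'
  have hπeq : ∀ x y : End N, π x = π y ↔ x - y ∈ RN := fun x y =>
    Iff.trans (RingCon.eq RN.ringCon) (TwoSidedIdeal.rel_iff RN x y)
  have hker : ∀ x ∈ RingHom.ker π, IsNilpotent x := by
    intro x hx
    refine hRNnil x ?_
    have h0 : π x = π 0 := by rw [map_zero]; exact hx
    simpa using (hπeq x 0).1 h0
  let a : ι → End N := fun i => sN ≫ (e i : M ⟶ M) ≫ rN
  have ha : ∀ i, a i = sN ≫ (e i : M ⟶ M) ≫ rN := fun _ => rfl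
  have hψa : ∀ i, ψ (a i) = ε * e i * ε := by
    intro i
    rw [cornerHom_apply, ha]
    simp only [End.mul_def, ← hNe, Category.assoc]
  have key : ∀ i j, (ε * e i * ε) * (ε * e j * ε) - ε * (e i * e j) * ε ∈ R := by
    intro i j
    have h1 : ε * e j - e j * ε ∈ R := by
      have := R.neg_mem (hcentral j ε); rwa [neg_sub] at this
    have h2 : ε * e i * (ε * e j - e j * ε) * ε ∈ R :=
      R.mul_mem_right _ _ (R.mul_mem_left _ _ h1)
    have e1 : (ε * e i * ε) * (ε * e j * ε) = ε * e i * (ε * e j) * ε := by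
      rw [show (ε * e i * ε) * (ε * e j * ε) = ε * e i * ((ε * ε) * e j) * ε by noncomm_ring,
        hε.eq]
    have e2 : ε * e i * (ε * e j) * ε - ε * (e i * e j) * ε
        = ε * e i * (ε * e j - e j * ε) * ε := by
      rw [show ε * e i * (ε * e j - e j * ε) * ε
          = ε * e i * (ε * e j) * ε - ε * (e i * e j) * (ε * ε) by noncomm_ring, hε.eq]
    rw [e1, e2]
    exact h2
  have hsumA : ∑ i, a i = (1 : End N) := by
    have h1 : ∑ i, a i = sN ≫ (∑ i, (e i : M ⟶ M)) ≫ rN := by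
      rw [Preadditive.sum_comp, Preadditive.comp_sum]
    rw [h1, hsum, End.one_def, Category.id_comp, hN]
    rfl
  have hCOI : CompleteOrthogonalIdempotents (fun i => π (a i)) := by
    refine ⟨⟨fun i => ?_, fun i j hij => ?_⟩, ?_⟩
    · show π (a i) * π (a i) = π (a i)
      rw [← map_mul]
      refine (hπeq _ _).2 ((hmemRN _).2 ?_)
      rw [map_sub, map_mul, hψa i]
      have := key i i
      rwa [(he i).eq] at this
    · show π (a i) * π (a j) = 0
      rw [← map_mul, ← map_zero π]
      refine (hπeq _ _).2 ((hmemRN _).2 ?_)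
      rw [sub_zero, map_mul, hψa i, hψa j]
      have := key i j
      rwa [horth i j hij, mul_zero, zero_mul, sub_zero] at this
    · show ∑ i, π (a i) = 1
      rw [← map_sum, hsumA, map_one]
  obtain ⟨f, hf, hfa⟩ :=
    CompleteOrthogonalIdempotents.lift_of_isNilpotent_ker π hker hCOI (fun i => ⟨a i, rfl⟩)
  have hfRN : ∀ i, a i - f i ∈ RN := by
    intro i
    exact (hπeq _ _).1 (congr_fun hfa i).symm
  have hsplit : ∀ i, ∃ (Y : C) (u : Y ⟶ N) (v : N ⟶ Y), u ≫ v = 𝟙 Y ∧ v ≫ u = f i :=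
    fun i => IsIdempotentComplete.idempotents_split N (f i) (hf.idem i).eq
  choose Nf ι' p' h1 h2 using hsplit
  refine ⟨Nf, ⟨?_⟩, ?_⟩
  · refine ⟨biproduct.lift p', biproduct.desc ι', ?_, ?_⟩
    · rw [biproduct.lift_desc]
      have hpp : ∑ j, p' j ≫ ι' j = ∑ j, f j := Finset.sum_congr rfl fun j _ => h2 j
      rw [hpp, hf.complete]
      rfl
    · apply biproduct.hom_ext
      intro k
      rw [Category.assoc, biproduct.lift_π, Category.id_comp]
      apply biproduct.hom_ext'
      intro j
      rw [biproduct.ι_desc_assoc]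
      by_cases hjk : j = k
      · subst hjk; rw [h1 j, biproduct.ι_π_self]
      · rw [biproduct.ι_π_ne _ hjk]
        have hz : (f j : N ⟶ N) ≫ f k = 0 := hf.ortho (Ne.symm hjk)
        have hstep : ι' j ≫ p' k = ι' j ≫ ((f j : N ⟶ N) ≫ f k) ≫ p' k := by
          rw [← h2 j, ← h2 k]
          simp only [Category.assoc]
          rw [reassoc_of% (h1 j), h1 k, Category.comp_id]
        rw [hstep, hz]
        simp
  · intro i
    let u : Nf i ⟶ Mf i := ι' i ≫ sN ≫ r i
    let v0 : Mf i ⟶ Nf i := s i ≫ rN ≫ p' i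
    set z : End (Nf i) := ι' i ≫ ((a i - f i : End N) : N ⟶ N) ≫ p' i with hzdef
    have hid : (ι' i ≫ (f i : N ⟶ N) ≫ p' i : End (Nf i)) = 𝟙 (Nf i) := by
      rw [← h2 i]
      simp only [Category.assoc]
      rw [reassoc_of% (h1 i), h1 i]
    have hw : u ≫ v0 = (1 : End (Nf i)) + z := by
      have hA : u ≫ v0 = (ι' i ≫ ((a i : End N) : N ⟶ N) ≫ p' i : End (Nf i)) := by
        show (ι' i ≫ sN ≫ r i) ≫ (s i ≫ rN ≫ p' i) = ι' i ≫ (sN ≫ e i ≫ rN) ≫ p' i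
        simp only [Category.assoc]
        rw [reassoc_of% (hMe i)]
      rw [hA, show (1 : End (Nf i)) = 𝟙 (Nf i) from rfl, ← hid, hzdef]
      show ι' i ≫ ((a i : End N) : N ⟶ N) ≫ p' i
          = ι' i ≫ (f i : N ⟶ N) ≫ p' i + ι' i ≫ ((a i - f i : End N) : N ⟶ N) ≫ p' i
      rw [Preadditive.sub_comp, Preadditive.comp_sub]
      abel
    have hxz : cornerHom (ι' i) (p' i) (h1 i) z = f i * (a i - f i) * f i := by
      rw [hzdef, cornerHom_apply]
      simp only [End.mul_def, ← h2 i, Category.assoc]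
    have hznil : IsNilpotent z := by
      apply isNilpotent_of_cornerHom (ι' i) (p' i) (h1 i)
      rw [hxz]
      exact hRNnil _ (RN.mul_mem_right _ _ (RN.mul_mem_left _ _ (hfRN i)))
    obtain ⟨uw, huw⟩ := hznil.isUnit_one_add
    refine ⟨u, v0 ≫ ((↑uw⁻¹ : End (Nf i)) : Nf i ⟶ Nf i), ?_⟩
    rw [← Category.assoc, hw]
    show (↑uw⁻¹ : End (Nf i)) * ((1 : End (Nf i)) + z) = 𝟙 (Nf i)
    have h3 : ((1 : End (Nf i)) + z : End (Nf i)) = ↑uw := huw.symm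
    rw [h3, Units.inv_mul]
    rfl
end

section
/- Let j_♯ ⊣ j* be an adjunction of functors j_♯ : C' → C, j* : C → C' between categories, and S', S classes of morphisms of C' and C containing the isomorphisms, with j_♯(S') ⊆ S and j*(S) ⊆ S'. Suppose the unit Id_{C'} ⇒ j* j_♯ is an isomorphism and for every object X of C the counit j_♯ j* X → X lies in S. Then the induced adjunction between the localizations S'^{-1}C' and S^{-1}C is an adjoint equivalence of categories. -/
open CategoryTheory

universe v₁ v₂ u₁ u₂

lemma isIso_natTrans_of_loc {C D E : Type*} [Category C] [Category D] [Category E]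
    (L : C ⥤ D) (W : MorphismProperty C) [L.IsLocalization W]
    {F G : D ⥤ E} (α : F ⟶ G) (h : ∀ X : C, IsIso (α.app (L.obj X))) : IsIso α := by
  have := Localization.essSurj L W
  have : ∀ Y : D, IsIso (α.app Y) := fun Y => by
    let e := L.objObjPreimageIso Y
    have heq : α.app Y = F.map e.inv ≫ α.app (L.obj (L.objPreimage Y)) ≫ G.map e.hom := by
      rw [← α.naturality e.hom, ← F.map_comp_assoc, e.inv_hom_id, F.map_id,
        Category.id_comp]
    rw [heq]
    have := h (L.objPreimage Y)
    infer_instance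
  exact NatIso.isIso_of_isIso_app α

/-- Let `j♯ ⊣ j*` be an adjunction between `j♯ : C' ⥤ C` and
`j* : C ⥤ C'`, and `S'`, `S` classes of morphisms of `C'`, `C` containing the isomorphisms,
with `j♯(S') ⊆ S` and `j*(S) ⊆ S'`.  If the unit `Id ⇒ j* j♯` is an isomorphism and for
every `X` the counit `j♯ j* X ⟶ X` lies in `S`, then the induced adjunction between the
localizations `S'⁻¹C'` and `S⁻¹C` is an adjoint equivalence of categories. -/
theorem stmt18 {C' : Type u₁} [Category.{v₁} C'] {C : Type u₂} [Category.{v₂} C]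
    (jsharp : C' ⥤ C) (jstar : C ⥤ C') (adj : jsharp ⊣ jstar)
    (S' : MorphismProperty C') (S : MorphismProperty C)
    (hisos' : MorphismProperty.isomorphisms C' ≤ S')
    (hisos : MorphismProperty.isomorphisms C ≤ S)
    (hsharp : S'.map jsharp ≤ S) (hstar : S.map jstar ≤ S')
    (hunit : IsIso adj.unit) (hcounit : ∀ X : C, S (adj.counit.app X))
    (G : S'.Localization ⥤ S.Localization) (G' : S.Localization ⥤ S'.Localization)
    [Localization.Lifting S'.Q S' (jsharp ⋙ S.Q) G]
    [Localization.Lifting S.Q S (jstar ⋙ S'.Q) G'] :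
    Nonempty (G ⊣ G') ∧ G.IsEquivalence ∧ G'.IsEquivalence := by
  letI : CatCommSq jsharp S'.Q S.Q G :=
    ⟨(Localization.Lifting.iso S'.Q S' (jsharp ⋙ S.Q) G).symm⟩
  letI : CatCommSq jstar S.Q S'.Q G' :=
    ⟨(Localization.Lifting.iso S.Q S (jstar ⋙ S'.Q) G').symm⟩
  let a := adj.localization S'.Q S' S.Q S G G'
  have hu : IsIso a.unit := by
    apply isIso_natTrans_of_loc S'.Q S'
    intro X
    rw [Adjunction.localization_unit_app]
    have : IsIso (adj.unit.app X) := inferInstance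
    infer_instance
  have hc : IsIso a.counit := by
    apply isIso_natTrans_of_loc S.Q S
    intro X
    rw [Adjunction.localization_counit_app]
    have : IsIso (S.Q.map (adj.counit.app X)) :=
      Localization.inverts S.Q S _ (hcounit X)
    infer_instance
  have hu' : ∀ Y, IsIso (a.unit.app Y) := fun Y => inferInstance
  have hc' : ∀ Y, IsIso (a.counit.app Y) := fun Y => inferInstance
  exact ⟨⟨a⟩, a.toEquivalence.isEquivalence_functor, a.toEquivalence.isEquivalence_inverse⟩
end
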